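/- arXiv:2312.16672 — 6 statements merged into one kernel-verified Lean document; each statement's English description precedes it below -/
import Mathlib

section
/- Let d ≥ 1, m ≥ 2, and r be integers with 2 ≤ 2r ≤ m−1. For every skew-symmetric matrix polynomial Q ∈ POLss_{d,m×m} with rank 2r₁, where r₁ < r, there exists a sequence (P^{(k)})_{k∈ℕ} of skew-symmetric matrix polynomials in POLss_{d,m×m} such that every P^{(k)} has rank exactly 2r and P^{(k)} converges to Q (coefficient-wise) as k → ∞. -/
open Matrix

noncomputable section

abbrev Mat (n : ℕ) := Matrix (Fin n) (Fin n) ℂ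

/-- The matrix `X·A − B` over the field of rational functions `ℂ(X)`. -/
def pencilRatMat {ι : Type} [Fintype ι] (A B : Matrix ι ι ℂ) :
    Matrix ι ι (RatFunc ℂ) :=
  Matrix.of fun i j =>
    RatFunc.X * algebraMap ℂ (RatFunc ℂ) (A i j) - algebraMap ℂ (RatFunc ℂ) (B i j)

/-- The normal rank of the pencil `λA − B`. -/
def pencilRank {ι : Type} [Fintype ι] (A B : Matrix ι ι ℂ) : ℕ :=
  (pencilRatMat A B).rank

/-- `G_k`: the `k×(k+1)` matrix with ones on the main diagonal. -/
def Gmat (k : ℕ) : Matrix (Fin k) (Fin (k+1)) ℂ :=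
  Matrix.of fun i j => if (j : ℕ) = (i : ℕ) then 1 else 0

/-- `F_k`: the `k×(k+1)` matrix with ones on the superdiagonal. -/
def Fmat (k : ℕ) : Matrix (Fin k) (Fin (k+1)) ℂ :=
  Matrix.of fun i j => if (j : ℕ) = (i : ℕ) + 1 then 1 else 0

/-- `J_k(0)`: the `k×k` nilpotent Jordan block. -/
def Jnil (k : ℕ) : Matrix (Fin k) (Fin k) ℂ :=
  Matrix.of fun i j => if (j : ℕ) = (i : ℕ) + 1 then 1 else 0

/-- λ-coefficient of the canonical block `M_k`. -/
def MAm (k : ℕ) : Matrix (Fin k ⊕ Fin (k+1)) (Fin k ⊕ Fin (k+1)) ℂ :=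
  Matrix.fromBlocks 0 (Gmat k) (-(Gmat k)ᵀ) 0

/-- constant coefficient of the canonical block `M_k`. -/
def MBm (k : ℕ) : Matrix (Fin k ⊕ Fin (k+1)) (Fin k ⊕ Fin (k+1)) ℂ :=
  Matrix.fromBlocks 0 (Fmat k) (-(Fmat k)ᵀ) 0

/-- λ-coefficient of the canonical block `K_k`. -/
def KAm (k : ℕ) : Matrix (Fin k ⊕ Fin k) (Fin k ⊕ Fin k) ℂ :=
  Matrix.fromBlocks 0 (Jnil k) (-(Jnil k)ᵀ) 0

/-- constant coefficient of the canonical block `K_k`. -/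
def KBm (k : ℕ) : Matrix (Fin k ⊕ Fin k) (Fin k ⊕ Fin k) ℂ :=
  Matrix.fromBlocks 0 1 (-1) 0

/-- Index type for the block-diagonal pencil `𝒲`:
`s` copies of `M_{α+1}`, `t` copies of `M_α`, `r` copies of `K_1`. -/
abbrev WIdx (s t r : ℕ) : Type := (Fin s ⊕ Fin t) ⊕ Fin r

/-- Sizes of the diagonal blocks of `𝒲`. -/
def WSize (α : ℕ) {s t r : ℕ} : WIdx s t r → ℕ
  | Sum.inl (Sum.inl _) => (α + 1) + (α + 1 + 1)
  | Sum.inl (Sum.inr _) => α + (α + 1)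
  | Sum.inr _ => 1 + 1

/-- Diagonal blocks of the λ-coefficient of `𝒲`. -/
def WBlkA (α : ℕ) {s t r : ℕ} :
    (i : WIdx s t r) → Matrix (Fin (WSize α i)) (Fin (WSize α i)) ℂ
  | Sum.inl (Sum.inl _) => Matrix.reindex finSumFinEquiv finSumFinEquiv (MAm (α + 1))
  | Sum.inl (Sum.inr _) => Matrix.reindex finSumFinEquiv finSumFinEquiv (MAm α)
  | Sum.inr _ => Matrix.reindex finSumFinEquiv finSumFinEquiv (KAm 1)

/-- Diagonal blocks of the constant coefficient of `𝒲`. -/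
def WBlkB (α : ℕ) {s t r : ℕ} :
    (i : WIdx s t r) → Matrix (Fin (WSize α i)) (Fin (WSize α i)) ℂ
  | Sum.inl (Sum.inl _) => Matrix.reindex finSumFinEquiv finSumFinEquiv (MBm (α + 1))
  | Sum.inl (Sum.inr _) => Matrix.reindex finSumFinEquiv finSumFinEquiv (MBm α)
  | Sum.inr _ => Matrix.reindex finSumFinEquiv finSumFinEquiv (KBm 1)

/-- λ-coefficient of `𝒲 = diag(M_{α+1}×s, M_α×t, K_1×r)`, reindexed to `Fin n`. -/
def WpencilA (α : ℕ) {s t r n : ℕ}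
    (e : (Σ i : WIdx s t r, Fin (WSize α i)) ≃ Fin n) : Mat n :=
  Matrix.reindex e e (Matrix.blockDiagonal' (WBlkA α))

/-- constant coefficient of `𝒲`, reindexed to `Fin n`. -/
def WpencilB (α : ℕ) {s t r n : ℕ}
    (e : (Σ i : WIdx s t r, Fin (WSize α i)) ≃ Fin n) : Mat n :=
  Matrix.reindex e e (Matrix.blockDiagonal' (WBlkB α))

/-- Congruence orbit of a pencil `(A,B)`, identified with pairs of matrices. -/
def congOrbit {n : ℕ} (W : Mat n × Mat n) : Set (Mat n × Mat n) :=
  {p | ∃ S : Mat n, IsUnit S ∧ p = (Sᵀ * W.1 * S, Sᵀ * W.2 * S)}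

end

noncomputable section

/-- The matrix polynomial `Σ_{k=0}^{d} X^k·(P k)` viewed over the field `ℂ(X)`. -/
def polyRatMat {m d : ℕ} (P : Fin (d + 1) → Mat m) :
    Matrix (Fin m) (Fin m) (RatFunc ℂ) :=
  Matrix.of fun i j =>
    ∑ k : Fin (d + 1), algebraMap ℂ (RatFunc ℂ) (P k i j) * RatFunc.X ^ (k : ℕ)

/-- The (normal) rank of a matrix polynomial, given by its coefficients, over `ℂ(X)`. -/
def polyRank {m d : ℕ} (P : Fin (d + 1) → Mat m) : ℕ :=
  (polyRatMat P).rank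

/-- λ-coefficient of the skew-symmetric linearization `F_P` of a skew-symmetric matrix
polynomial of odd grade `g` with coefficients `P 0, …, P g` (block entry `(k,l)` is the
`(k+1,l+1)` block in the 1-based description). -/
def linA (m g : ℕ) (P : Fin (g + 1) → Mat m) :
    Matrix (Fin g × Fin m) (Fin g × Fin m) ℂ :=
  Matrix.of fun p q =>
    if p.1 = q.1 then
      (if (p.1 : ℕ) % 2 = 0 then
        P ⟨g - (p.1 : ℕ), Nat.lt_succ_of_le (Nat.sub_le g _)⟩ p.2 q.2
      else 0)
    else if (q.1 : ℕ) = (p.1 : ℕ) + 1 ∧ (p.1 : ℕ) % 2 = 1 then -((1 : Mat m) p.2 q.2)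
    else if (p.1 : ℕ) = (q.1 : ℕ) + 1 ∧ (q.1 : ℕ) % 2 = 1 then (1 : Mat m) p.2 q.2
    else 0

/-- Constant coefficient of the skew-symmetric linearization `F_P`. -/
def linB (m g : ℕ) (P : Fin (g + 1) → Mat m) :
    Matrix (Fin g × Fin m) (Fin g × Fin m) ℂ :=
  Matrix.of fun p q =>
    if p.1 = q.1 then
      (if (p.1 : ℕ) % 2 = 0 then
        -(P ⟨g - ((p.1 : ℕ) + 1), Nat.lt_succ_of_le (Nat.sub_le g _)⟩ p.2 q.2)
      else 0)
    else if (q.1 : ℕ) = (p.1 : ℕ) + 1 ∧ (p.1 : ℕ) % 2 = 0 then (1 : Mat m) p.2 q.2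
    else if (p.1 : ℕ) = (q.1 : ℕ) + 1 ∧ (q.1 : ℕ) % 2 = 0 then -((1 : Mat m) p.2 q.2)
    else 0

/-- A polynomial of grade `d` regarded as a polynomial of grade `d+1`
(with zero coefficient of `λ^{d+1}`). -/
def extendPoly {m d : ℕ} (Q : Fin (d + 1) → Mat m) : Fin (d + 2) → Mat m :=
  fun k => if h : (k : ℕ) < d + 1 then Q ⟨k, h⟩ else 0

end

/-!
Over `ℂ(λ)` the matrix `A = Q(λ)` is skew-symmetric of rank `2r₁`. Pick `2c = 2(r - r₁)` standard
basis vectors `e_{ι j}` that stay linearly independent modulo the column space of `A`, let `V` be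
the matrix with these columns and `J` the standard symplectic form, and add `ε • V J Vᵀ` to the
constant coefficient of `Q`. The column spaces of `A` and `V J Vᵀ` meet only in `0`; for
skew-symmetric matrices row and column spaces coincide, and then ranks add. So every
perturbation has rank `2r₁ + 2c = 2r`, and the perturbations tend to `Q` as `ε → 0`.
-/

namespace Matrix

section RankAdd

variable {K : Type*} [Field K] {m n κ : Type*} [Fintype n]

theorem ker_mulVecLin_add_of_disjoint {A B : Matrix m n K}
    (h : Disjoint (LinearMap.range A.mulVecLin) (LinearMap.range B.mulVecLin)) :
    LinearMap.ker (A + B).mulVecLin = LinearMap.ker A.mulVecLin ⊓ LinearMap.ker B.mulVecLin := by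
  ext x
  simp only [LinearMap.mem_ker, Submodule.mem_inf, mulVecLin_apply, add_mulVec]
  refine ⟨fun hx => ?_, fun ⟨hA, hB⟩ => by rw [hA, hB, add_zero]⟩
  have hAx : A *ᵥ x = B *ᵥ (-x) := by rw [mulVec_neg, eq_neg_of_add_eq_zero_left hx]
  have h0 : A *ᵥ x = 0 := Submodule.disjoint_def.mp h _ ⟨x, rfl⟩ ⟨-x, hAx.symm⟩
  exact ⟨h0, by simpa [h0] using hx⟩

theorem ker_mulVecLin_fromRows (A : Matrix m n K) (B : Matrix κ n K) :
    LinearMap.ker (fromRows A B).mulVecLin =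
      LinearMap.ker A.mulVecLin ⊓ LinearMap.ker B.mulVecLin := by
  ext x
  simp [fromRows_mulVec, ← Sum.elim_zero_zero, Sum.elim_eq_iff]

theorem range_mulVecLin_fromCols [Fintype κ] (A : Matrix m n K) (B : Matrix m κ K) :
    LinearMap.range (fromCols A B).mulVecLin =
      LinearMap.range A.mulVecLin ⊔ LinearMap.range B.mulVecLin := by
  have hcol : (fromCols A B).col = Sum.elim A.col B.col := by
    ext (j | j) i <;> rfl
  rw [range_mulVecLin, range_mulVecLin, range_mulVecLin, hcol, Set.Sum.elim_range,
    Submodule.span_union]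

/- `A + B` and the stacked matrix `fromRows A B` have the same kernel, and the transpose of the
latter is `fromCols Aᵀ Bᵀ`, whose column space is `range Aᵀ ⊕ range Bᵀ`. -/
theorem rank_add_of_disjoint [Fintype m] {A B : Matrix m n K}
    (hcol : Disjoint (LinearMap.range A.mulVecLin) (LinearMap.range B.mulVecLin))
    (hrow : Disjoint (LinearMap.range Aᵀ.mulVecLin) (LinearMap.range Bᵀ.mulVecLin)) :
    (A + B).rank = A.rank + B.rank := by
  have hsum := LinearMap.finrank_range_add_finrank_ker (A + B).mulVecLin
  have hrows := LinearMap.finrank_range_add_finrank_ker (fromRows A B).mulVecLin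
  rw [ker_mulVecLin_add_of_disjoint hcol] at hsum
  rw [ker_mulVecLin_fromRows] at hrows
  have hsup := Submodule.finrank_sup_add_finrank_inf_eq
    (LinearMap.range Aᵀ.mulVecLin) (LinearMap.range Bᵀ.mulVecLin)
  rw [hrow.eq_bot, finrank_bot, add_zero, ← range_mulVecLin_fromCols, ← transpose_fromRows] at hsup
  calc (A + B).rank = (fromRows A B).rank := by unfold rank; omega
    _ = A.rank + B.rank := by
      rw [← rank_transpose (fromRows A B), ← rank_transpose A, ← rank_transpose B]
      exact hsup

theorem range_mulVecLin_of_transpose_eq_neg {A : Matrix n n K} (hA : Aᵀ = -A) :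
    LinearMap.range Aᵀ.mulVecLin = LinearMap.range A.mulVecLin := by
  rw [hA, show (-A).mulVecLin = -A.mulVecLin from LinearMap.ext A.neg_mulVec,
    LinearMap.range_neg]

theorem rank_add_of_transpose_eq_neg {A B : Matrix n n K} (hA : Aᵀ = -A) (hB : Bᵀ = -B)
    (h : Disjoint (LinearMap.range A.mulVecLin) (LinearMap.range B.mulVecLin)) :
    (A + B).rank = A.rank + B.rank :=
  rank_add_of_disjoint h <| by
    rwa [range_mulVecLin_of_transpose_eq_neg hA, range_mulVecLin_of_transpose_eq_neg hB]

end RankAdd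

theorem transpose_mul_mul_transpose_eq_neg {R n κ : Type*} [CommRing R] [Fintype κ]
    (V : Matrix n κ R) {S : Matrix κ κ R} (hS : Sᵀ = -S) : (V * S * Vᵀ)ᵀ = -(V * S * Vᵀ) := by
  simp [transpose_mul, hS, Matrix.mul_assoc]

theorem transpose_smul_J {l R : Type*} [DecidableEq l] [CommRing R] (t : R) :
    (t • J l R)ᵀ = -(t • J l R) := by
  rw [transpose_smul, J_transpose, smul_neg]

section SkewPerturbation

variable {K : Type*} [Field K] {n κ : Type*} [Fintype n] [Fintype κ] [DecidableEq κ]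
  {V : Matrix n κ K} {S : Matrix κ κ K}

theorem rank_eq_card_of_transpose_mul_self_eq_one (hV : Vᵀ * V = 1) :
    V.rank = Fintype.card κ :=
  le_antisymm V.rank_le_card_width <| by
    simpa [hV] using rank_mul_le_right Vᵀ V

theorem range_mulVecLin_mul_mul_transpose (hV : Vᵀ * V = 1) (hS : IsUnit S) :
    LinearMap.range (V * S * Vᵀ).mulVecLin = LinearMap.range V.mulVecLin := by
  obtain ⟨u, rfl⟩ := hS
  refine le_antisymm ?_ fun y ⟨x, hx⟩ => ⟨V *ᵥ (↑u⁻¹ *ᵥ x), ?_⟩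
  · rw [Matrix.mul_assoc, mulVecLin_mul]
    exact LinearMap.range_comp_le_range _ _
  · rw [← hx, mulVecLin_apply, mulVecLin_apply, mulVec_mulVec, mulVec_mulVec,
      Matrix.mul_assoc, Matrix.mul_assoc, ← Matrix.mul_assoc Vᵀ, hV, Matrix.one_mul,
      Matrix.mul_assoc, Units.mul_inv, Matrix.mul_one]

theorem rank_add_mul_mul_transpose_of_transpose_eq_neg {A : Matrix n n K} (hA : Aᵀ = -A)
    (hV : Vᵀ * V = 1) (hS : Sᵀ = -S) (hSu : IsUnit S)
    (h : Disjoint (LinearMap.range A.mulVecLin) (LinearMap.range V.mulVecLin)) :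
    (A + V * S * Vᵀ).rank = A.rank + Fintype.card κ := by
  rw [rank_add_of_transpose_eq_neg hA (transpose_mul_mul_transpose_eq_neg V hS)
      (by rwa [range_mulVecLin_mul_mul_transpose hV hSu]),
    ← rank_eq_card_of_transpose_mul_self_eq_one hV]
  unfold rank
  rw [range_mulVecLin_mul_mul_transpose hV hSu]

end SkewPerturbation

section StandardBasisColumns

variable {K : Type*} [Field K] {n κ : Type*} [Fintype n] [DecidableEq n]

theorem transpose_submatrix_one_mul_self [DecidableEq κ] {ι : κ → n}
    (hι : Function.Injective ι) :
    ((1 : Matrix n n K).submatrix id ι)ᵀ * (1 : Matrix n n K).submatrix id ι = 1 := by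
  rw [transpose_submatrix, transpose_one, ← submatrix_mul _ _ _ _ _ Function.bijective_id,
    Matrix.one_mul]
  exact submatrix_one_embedding ⟨ι, hι⟩

/- The images of the standard basis vectors span `(n → K) ⧸ R`; a linearly independent subfamily
has `card n - finrank R` members, and its span is disjoint from `R = ker R.mkQ`. -/
theorem exists_injective_disjoint_range_submatrix_one [Fintype κ] (R : Submodule K (n → K))
    (h : Fintype.card κ + Module.finrank K R ≤ Fintype.card n) :
    ∃ ι : κ → n, Function.Injective ι ∧
      Disjoint R (LinearMap.range ((1 : Matrix n n K).submatrix id ι).mulVecLin) := by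
  obtain ⟨κ', a, ha, hspan, hli⟩ :=
    exists_linearIndependent' K (R.mkQ ∘ (1 : Matrix n n K).col)
  have : Finite κ' := Finite.of_injective a ha
  have : Fintype κ' := Fintype.ofFinite κ'
  have hspan_top : Submodule.span K (Set.range (R.mkQ ∘ (1 : Matrix n n K).col)) = ⊤ := by
    rw [Set.range_comp, Submodule.span_image, ← range_mulVecLin, mulVecLin_one,
      LinearMap.range_id, Submodule.map_top, Submodule.range_mkQ]
  have hcard : Fintype.card κ' + Module.finrank K R = Fintype.card n := by
    rw [← finrank_span_eq_card hli, hspan, hspan_top, finrank_top,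
      Submodule.finrank_quotient_add_finrank, Module.finrank_fintype_fun_eq_card]
  obtain ⟨e⟩ : Nonempty (κ ↪ κ') := Function.Embedding.nonempty_of_card_le (by omega)
  refine ⟨a ∘ e, ha.comp e.injective, ?_⟩
  have hdisj := Submodule.range_ker_disjoint (hli.comp e e.injective)
  rw [Submodule.ker_mkQ] at hdisj
  rw [range_mulVecLin]
  exact hdisj.symm

end StandardBasisColumns

end Matrix

section PolyRatMat

variable {m d : ℕ}

theorem polyRatMat_add (P P' : Fin (d + 1) → Mat m) :
    polyRatMat (P + P') = polyRatMat P + polyRatMat P' := by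
  ext i j
  simp [polyRatMat, add_mul, Finset.sum_add_distrib]

theorem polyRatMat_single_zero (E : Mat m) :
    polyRatMat (Pi.single 0 E : Fin (d + 1) → Mat m) = E.map (algebraMap ℂ (RatFunc ℂ)) := by
  ext i j
  rw [polyRatMat, of_apply, Finset.sum_eq_single 0 (fun k _ hk => by simp [hk]) (by simp)]
  simp

theorem transpose_polyRatMat_eq_neg {P : Fin (d + 1) → Mat m} (hP : ∀ k, (P k)ᵀ = -P k) :
    (polyRatMat P)ᵀ = -polyRatMat P := by
  ext i j
  have hPji (k : Fin (d + 1)) : P k j i = -P k i j := by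
    rw [← transpose_apply (P k), hP, neg_apply]
  simp [polyRatMat, hPji]

theorem polyRank_add_single_zero_mul_mul_transpose {Q : Fin (d + 1) → Mat m}
    (hQ : ∀ k, (Q k)ᵀ = -Q k) {κ : Type*} [Fintype κ] [DecidableEq κ] {ι : κ → Fin m}
    (hι : Function.Injective ι)
    (h : Disjoint (LinearMap.range (polyRatMat Q).mulVecLin)
      (LinearMap.range ((1 : Matrix (Fin m) (Fin m) (RatFunc ℂ)).submatrix id ι).mulVecLin))
    {S : Matrix κ κ ℂ} (hS : Sᵀ = -S) (hSu : IsUnit S) :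
    polyRank (Q + Pi.single 0 ((1 : Mat m).submatrix id ι * S * ((1 : Mat m).submatrix id ι)ᵀ))
      = polyRank Q + Fintype.card κ := by
  set f := algebraMap ℂ (RatFunc ℂ)
  have hV : ((1 : Mat m).submatrix id ι).map f = (1 : Matrix _ _ (RatFunc ℂ)).submatrix id ι := by
    rw [← submatrix_map, Matrix.map_one f (map_zero f) (map_one f)]
  rw [polyRank, polyRank, polyRatMat_add, polyRatMat_single_zero, Matrix.map_mul, Matrix.map_mul,
    transpose_map, hV]
  refine rank_add_mul_mul_transpose_of_transpose_eq_neg (transpose_polyRatMat_eq_neg hQ)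
    (transpose_submatrix_one_mul_self hι) ?_ (hSu.map f.mapMatrix) h
  rw [← transpose_map, hS, Matrix.map_neg f (map_neg f)]

end PolyRatMat

theorem skewsymmetric_poly_rank_approximation_general
    (d m r r₁ : ℕ) (hrm : 2 * r ≤ m - 1)
    (Q : Fin (d + 1) → Mat m) (hQss : ∀ k, (Q k)ᵀ = -(Q k))
    (hQrank : polyRank Q = 2 * r₁) (hr₁ : r₁ < r) :
    ∃ P : ℕ → (Fin (d + 1) → Mat m),
      (∀ k, ∀ i, ((P k) i)ᵀ = -((P k) i)) ∧
      (∀ k, polyRank (P k) = 2 * r) ∧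
      Filter.Tendsto P Filter.atTop (nhds Q) := by
  obtain ⟨ι, hι, hdisj⟩ := exists_injective_disjoint_range_submatrix_one
    (κ := Fin (r - r₁) ⊕ Fin (r - r₁)) (LinearMap.range (polyRatMat Q).mulVecLin)
    (by rw [Fintype.card_sum, Fintype.card_fin, Fintype.card_fin,
      show Module.finrank _ _ = 2 * r₁ from hQrank]; omega)
  set V : Matrix (Fin m) (Fin (r - r₁) ⊕ Fin (r - r₁)) ℂ := (1 : Mat m).submatrix id ι
  set P : ℂ → Fin (d + 1) → Mat m := fun t =>
    Q + Pi.single 0 (V * (t • J (Fin (r - r₁)) ℂ) * Vᵀ)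
  have hP : Continuous P := continuous_const.add ((continuous_single 0).comp (by fun_prop))
  refine ⟨fun k => P (1 / ((k : ℂ) + 1)), fun k i => ?_, fun k => ?_, ?_⟩
  · have := transpose_mul_mul_transpose_eq_neg V (transpose_smul_J (1 / ((k : ℂ) + 1)))
    rcases eq_or_ne i 0 with rfl | hi
    · simp only [P, Pi.add_apply, Pi.single_eq_same, transpose_add, hQss, this, neg_add]
    · simp only [P, Pi.add_apply, Pi.single_eq_of_ne hi, add_zero, hQss]
  · have hk : (1 / ((k : ℂ) + 1)) ≠ 0 := one_div_ne_zero (Nat.cast_add_one_ne_zero k)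
    have hu : IsUnit ((1 / ((k : ℂ) + 1)) • J (Fin (r - r₁)) ℂ) :=
      ((isUnit_iff_isUnit_det _).mpr (isUnit_det_J _ _)).smul (Units.mk0 _ hk)
    rw [show polyRank (P _) = _ from polyRank_add_single_zero_mul_mul_transpose hQss hι hdisj
      (transpose_smul_J _) hu, hQrank, Fintype.card_sum, Fintype.card_fin]
    omega
  · simpa [P, Function.comp_def] using (hP.tendsto 0).comp tendsto_one_div_add_atTop_nhds_zero_nat

/-- **Lemma `srank`.**
For `d ≥ 1`, `m ≥ 2`, `2 ≤ 2r ≤ m−1`: every skew-symmetric matrix polynomial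
`Q ∈ POLss_{d,m×m}` of rank `2r₁` with `r₁ < r` is the coefficient-wise limit of a
sequence of skew-symmetric matrix polynomials in `POLss_{d,m×m}` of rank exactly `2r`. -/
theorem skewsymmetric_poly_rank_approximation
    (d m r r₁ : ℕ) (hd : 1 ≤ d) (hm : 2 ≤ m) (hr : 2 ≤ 2 * r) (hrm : 2 * r ≤ m - 1)
    (Q : Fin (d + 1) → Mat m) (hQss : ∀ k, (Q k)ᵀ = -(Q k))
    (hQrank : polyRank Q = 2 * r₁) (hr₁ : r₁ < r) :
    ∃ P : ℕ → (Fin (d + 1) → Mat m),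
      (∀ k, ∀ i, ((P k) i)ᵀ = -((P k) i)) ∧
      (∀ k, polyRank (P k) = 2 * r) ∧
      Filter.Tendsto P Filter.atTop (nhds Q) :=
  skewsymmetric_poly_rank_approximation_general d m r r₁ hrm Q hQss hQrank hr₁
end

section
/- Let g ≥ 3 be odd and let P, Q ∈ POLss_{g,m×m} be skew-symmetric matrix polynomials of grade g such that the leading coefficient of P (the coefficient of λ^g) is the zero matrix. If there exists an invertible matrix S ∈ ℂ^{mg×mg} such that Sᵀ F_P S = F_Q, where F_P and F_Q are the linearizations of P and Q, then the leading coefficient of Q is also the zero matrix. -/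
open Matrix

noncomputable section Aux
open Finset
variable {m g : ℕ}

lemma linA_entry_split (R : Fin (g + 1) → Mat m) (p q : Fin g) (j l : Fin m) :
    linA m g R (p, j) (q, l) =
      (if p = q then (if (p : ℕ) % 2 = 0 then
          R ⟨g - (p : ℕ), Nat.lt_succ_of_le (Nat.sub_le g _)⟩ j l else 0) else 0)
      + (if (q : ℕ) = (p : ℕ) + 1 ∧ (p : ℕ) % 2 = 1 then -(if j = l then 1 else 0) else 0)
      + (if (p : ℕ) = (q : ℕ) + 1 ∧ (q : ℕ) % 2 = 1 then (if j = l then 1 else 0) else 0) := by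
  simp only [linA, Matrix.of_apply, Matrix.one_apply, Fin.ext_iff]
  split_ifs <;> (try ring) <;> omega

lemma linA_mulVec_eval (R : Fin (g + 1) → Mat m) (x : Fin g × Fin m → ℂ)
    (p : Fin g) (j : Fin m) :
    (linA m g R).mulVec x (p, j) =
      (if (p : ℕ) % 2 = 0 then
        ∑ l, R ⟨g - (p : ℕ), Nat.lt_succ_of_le (Nat.sub_le g _)⟩ j l * x (p, l) else 0)
      + (∑ q : Fin g, if (q : ℕ) = (p : ℕ) + 1 ∧ (p : ℕ) % 2 = 1 then -(x (q, j)) else 0)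
      + (∑ q : Fin g, if (p : ℕ) = (q : ℕ) + 1 ∧ (q : ℕ) % 2 = 1 then x (q, j) else 0) := by
  classical
  rw [Matrix.mulVec, dotProduct, Fintype.sum_prod_type]
  simp only [linA_entry_split, add_mul, Finset.sum_add_distrib, ite_mul, zero_mul, neg_mul]
  congr 1
  congr 1
  · by_cases hp : (p : ℕ) % 2 = 0 <;>
      simp [hp, Finset.sum_ite_eq, Matrix.one_apply]
  · refine Finset.sum_congr rfl fun q _ => ?_
    by_cases hc : (q : ℕ) = (p : ℕ) + 1 ∧ (p : ℕ) % 2 = 1 <;>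
      simp [hc, one_mul, Finset.sum_ite_eq]
  · refine Finset.sum_congr rfl fun q _ => ?_
    by_cases hc : (p : ℕ) = (q : ℕ) + 1 ∧ (q : ℕ) % 2 = 1 <;>
      simp [hc, Finset.sum_ite_eq]

/-- Row value at an odd row `i` with `i+1 < g`. -/
lemma linA_row_odd (R : Fin (g + 1) → Mat m) (x : Fin g × Fin m → ℂ)
    (i : ℕ) (hi : i < g) (hi1 : i + 1 < g) (ho : i % 2 = 1) (j : Fin m) :
    (linA m g R).mulVec x (⟨i, hi⟩, j) = -(x (⟨i + 1, hi1⟩, j)) := by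
  rw [linA_mulVec_eval]
  have ho' : ¬ ((i:ℕ) % 2 = 0) := by omega
  have h1 : ∀ q : Fin g, ((q : ℕ) = i + 1 ∧ i % 2 = 1) ↔ ((⟨i+1, hi1⟩ : Fin g) = q) := by
    intro q; rw [Fin.ext_iff]; simp; omega
  have h2 : ∀ q : Fin g, ¬ (i = (q : ℕ) + 1 ∧ (q : ℕ) % 2 = 1) := by
    intro q ⟨h, h'⟩; omega
  simp only [ho', if_false, h1, h2, Finset.sum_ite_eq, Finset.mem_univ, if_true,
    Finset.sum_const_zero, zero_add, add_zero]

/-- Row value at an even row `i ≥ 1`. -/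
lemma linA_row_even (R : Fin (g + 1) → Mat m) (x : Fin g × Fin m → ℂ)
    (i : ℕ) (hi : i < g) (h1i : 1 ≤ i) (he : i % 2 = 0) (j : Fin m) :
    (linA m g R).mulVec x (⟨i, hi⟩, j) =
      (∑ l, R ⟨g - i, Nat.lt_succ_of_le (Nat.sub_le g _)⟩ j l * x (⟨i, hi⟩, l))
        + x (⟨i - 1, by omega⟩, j) := by
  rw [linA_mulVec_eval]
  have h2 : ∀ q : Fin g, ¬ (((q : ℕ) = i + 1) ∧ i % 2 = 1) := by
    intro q ⟨h, h'⟩; omega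
  have h3 : ∀ q : Fin g,
      (i = (q : ℕ) + 1 ∧ (q : ℕ) % 2 = 1) ↔ ((⟨i - 1, by omega⟩ : Fin g) = q) := by
    intro q; rw [Fin.ext_iff]; simp; omega
  simp only [h2, h3, if_false, he, if_true, Finset.sum_ite_eq, Finset.mem_univ,
    Finset.sum_const_zero, add_zero, zero_add]
  simp

/-- Row value at row 0. -/
lemma linA_row_zero (R : Fin (g + 1) → Mat m) (x : Fin g × Fin m → ℂ)
    (hg : 0 < g) (j : Fin m) :
    (linA m g R).mulVec x (⟨0, hg⟩, j) =
      ∑ l, R ⟨g, Nat.lt_succ_self g⟩ j l * x (⟨0, hg⟩, l) := by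
  rw [linA_mulVec_eval]
  have h2 : ∀ q : Fin g, ¬ (((q : ℕ) = 0 + 1) ∧ (0:ℕ) % 2 = 1) := by
    intro q ⟨h, h'⟩; omega
  have h3 : ∀ q : Fin g, ¬ ((0:ℕ) = (q : ℕ) + 1 ∧ (q : ℕ) % 2 = 1) := by
    intro q ⟨h, h'⟩; omega
  simp only [h2, h3, if_false, Finset.sum_const_zero, add_zero]
  norm_num



/-- Kernel vectors of `linA` vanish on all block rows `i ≥ 1`. -/
lemma linA_kernel_vanish (Q : Fin (g + 1) → Mat m) (hgm : g % 2 = 1)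
    (x : Fin g × Fin m → ℂ) (hx : (linA m g Q).mulVec x = 0) :
    ∀ (i : ℕ) (hi : i < g), 1 ≤ i → ∀ j, x (⟨i, hi⟩, j) = 0 := by
  have heven : ∀ (i : ℕ) (hi : i < g), 1 ≤ i → i % 2 = 0 → ∀ j, x (⟨i, hi⟩, j) = 0 := by
    intro i hi h1 h2 j
    have hio : (i - 1) % 2 = 1 := by omega
    have hlt : i - 1 < g := by omega
    have hlt1 : (i - 1) + 1 < g := by omega
    have hr := linA_row_odd Q x (i - 1) hlt hlt1 hio j
    rw [hx] at hr
    have he : (⟨i - 1 + 1, hlt1⟩ : Fin g) = ⟨i, hi⟩ := Fin.ext (by simp; omega)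
    rw [he] at hr
    simpa [neg_eq_zero] using hr.symm
  intro i hi h1 j
  by_cases he : i % 2 = 0
  · exact heven i hi h1 he j
  · have h2 : i + 1 < g := by omega
    have hr := linA_row_even Q x (i + 1) h2 (by omega) (by omega) j
    rw [hx] at hr
    have hz : ∀ l, x (⟨i + 1, h2⟩, l) = 0 := fun l => heven (i + 1) h2 (by omega) (by omega) l
    simp only [hz, mul_zero, Finset.sum_const_zero, zero_add, Pi.zero_apply] at hr
    have he' : (⟨i + 1 - 1, by omega⟩ : Fin g) = ⟨i, hi⟩ := Fin.ext (by simp)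
    rw [he'] at hr
    exact hr.symm

/-- Block column 0 of `linA P` vanishes when the leading coefficient does. -/
lemma linA_col0_zero (P : Fin (g + 1) → Mat m) (hg0 : 0 < g)
    (hPlead : P ⟨g, Nat.lt_succ_self g⟩ = 0) (p : Fin g) (j l : Fin m) :
    linA m g P (p, j) (⟨0, hg0⟩, l) = 0 := by
  rw [linA_entry_split]
  have hPg : ∀ h', P ⟨g - 0, h'⟩ = 0 := by
    intro h'
    rw [show (⟨g - 0, h'⟩ : Fin (g + 1)) = ⟨g, Nat.lt_succ_self g⟩ from Fin.ext (Nat.sub_zero g)]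
    exact hPlead
  rcases p with ⟨pv, hpv⟩
  by_cases hp0 : pv = 0
  · subst hp0
    simp [Fin.ext_iff, hPg, hPlead]
  · have e1 : ¬ ((⟨pv, hpv⟩ : Fin g) = ⟨0, hg0⟩) := by simp [Fin.ext_iff, hp0]
    have e2 : ¬ (((⟨0, hg0⟩ : Fin g) : ℕ) = pv + 1 ∧ pv % 2 = 1) := by
      intro ⟨h, _⟩; simp at h
    have e3 : ¬ ((pv : ℕ) = ((⟨0, hg0⟩ : Fin g) : ℕ) + 1 ∧ ((⟨0, hg0⟩ : Fin g) : ℕ) % 2 = 1) := by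
      intro ⟨_, h⟩; simp at h
    simp [e1, e2, e3]

lemma linA_mulVec_emb_zero (P : Fin (g + 1) → Mat m) (hg0 : 0 < g)
    (hPlead : P ⟨g, Nat.lt_succ_self g⟩ = 0) (u : Fin m → ℂ) :
    (linA m g P).mulVec
      (fun pj => if pj.1 = (⟨0, hg0⟩ : Fin g) then u pj.2 else 0) = 0 := by
  funext pj
  obtain ⟨p, j⟩ := pj
  rw [Matrix.mulVec, dotProduct, Fintype.sum_prod_type]
  simp only [Pi.zero_apply]
  refine Finset.sum_eq_zero fun q _ => Finset.sum_eq_zero fun l _ => ?_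
  by_cases hq : q = (⟨0, hg0⟩ : Fin g)
  · subst hq
    simp [linA_col0_zero P hg0 hPlead p j l]
  · simp [hq]

end Aux

noncomputable section

/-- Let `g ≥ 3` be odd and `P, Q` skew-symmetric `m×m` matrix polynomials of grade `g`
with zero leading coefficient of `P`.  If the linearizations `F_P` and `F_Q` are
congruent, then the leading coefficient of `Q` is also zero. -/
theorem congruent_linearizations_zero_leading_coefficient
    (m g : ℕ) (hg : 3 ≤ g) (hodd : Odd g)
    (P Q : Fin (g + 1) → Mat m)
    (hP : ∀ k, (P k)ᵀ = -(P k)) (hQ : ∀ k, (Q k)ᵀ = -(Q k))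
    (hPlead : P ⟨g, Nat.lt_succ_self g⟩ = 0)
    (S : Matrix (Fin g × Fin m) (Fin g × Fin m) ℂ) (hS : IsUnit S)
    (h1 : Sᵀ * linA m g P * S = linA m g Q)
    (h2 : Sᵀ * linB m g P * S = linB m g Q) :
    Q ⟨g, Nat.lt_succ_self g⟩ = 0 := by
  classical
  have hg0 : 0 < g := by omega
  have hgm : g % 2 = 1 := Nat.odd_iff.mp hodd
  have hdet : IsUnit S.det := (Matrix.isUnit_iff_isUnit_det S).mp hS
  let emb : (Fin m → ℂ) → (Fin g × Fin m → ℂ) :=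
    fun u pj => if pj.1 = (⟨0, hg0⟩ : Fin g) then u pj.2 else 0
  have hembadd : ∀ u v, emb (u + v) = emb u + emb v := by
    intro u v; funext pj
    by_cases h : pj.1 = (⟨0, hg0⟩ : Fin g) <;> simp [emb, h]
  have hembsmul : ∀ (c : ℂ) u, emb (c • u) = c • emb u := by
    intro c u; funext pj
    by_cases h : pj.1 = (⟨0, hg0⟩ : Fin g) <;> simp [emb, h]
  have hPker : ∀ u, (linA m g P).mulVec (emb u) = 0 :=
    fun u => linA_mulVec_emb_zero P hg0 hPlead u
  have hker : ∀ u, (linA m g Q).mulVec (S⁻¹.mulVec (emb u)) = 0 := by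
    intro u
    rw [← h1, Matrix.mulVec_mulVec,
      Matrix.mul_assoc (Sᵀ * linA m g P) S S⁻¹, Matrix.mul_nonsing_inv S hdet,
      Matrix.mul_one, ← Matrix.mulVec_mulVec, hPker, Matrix.mulVec_zero]
  have hvan : ∀ u (i : ℕ) (hi : i < g), 1 ≤ i → ∀ j,
      S⁻¹.mulVec (emb u) (⟨i, hi⟩, j) = 0 :=
    fun u => linA_kernel_vanish Q hgm _ (hker u)
  let f : (Fin m → ℂ) →ₗ[ℂ] (Fin m → ℂ) :=
    { toFun := fun u j => S⁻¹.mulVec (emb u) (⟨0, hg0⟩, j)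
      map_add' := by
        intro u v; funext j
        show S⁻¹.mulVec (emb (u + v)) (⟨0, hg0⟩, j) =
          S⁻¹.mulVec (emb u) (⟨0, hg0⟩, j) + S⁻¹.mulVec (emb v) (⟨0, hg0⟩, j)
        rw [hembadd, Matrix.mulVec_add]; rfl
      map_smul' := by
        intro c u; funext j
        show S⁻¹.mulVec (emb (c • u)) (⟨0, hg0⟩, j) =
          c • S⁻¹.mulVec (emb u) (⟨0, hg0⟩, j)
        rw [hembsmul, Matrix.mulVec_smul]; rfl }
  have hinj : Function.Injective f := by
    refine (injective_iff_map_eq_zero f).mpr ?_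
    intro u hu
    have hx0 : S⁻¹.mulVec (emb u) = 0 := by
      funext pj
      obtain ⟨⟨i, hi⟩, j⟩ := pj
      rcases Nat.eq_zero_or_pos i with h0 | h0
      · subst h0
        exact congrFun hu j
      · exact hvan u i hi h0 j
    have hemb0 : emb u = 0 := by
      have h' : S.mulVec (S⁻¹.mulVec (emb u)) = emb u := by
        rw [Matrix.mulVec_mulVec, Matrix.mul_nonsing_inv S hdet, Matrix.one_mulVec]
      rw [hx0, Matrix.mulVec_zero] at h'
      exact h'.symm
    funext j
    have := congrFun hemb0 ((⟨0, hg0⟩ : Fin g), j)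
    simpa [emb] using this
  have hsurj : Function.Surjective f := LinearMap.injective_iff_surjective.mp hinj
  ext j l
  obtain ⟨u, hu⟩ := hsurj (Pi.single l 1)
  have hfu : ∀ l', S⁻¹.mulVec (emb u) (⟨0, hg0⟩, l') = (Pi.single l 1 : Fin m → ℂ) l' := by
    intro l'
    exact congrFun hu l'
  have hrow := linA_row_zero Q (S⁻¹.mulVec (emb u)) hg0 j
  rw [hker u] at hrow
  have hsum : (∑ l', Q ⟨g, Nat.lt_succ_self g⟩ j l' *
      S⁻¹.mulVec (emb u) (⟨0, hg0⟩, l')) = 0 := by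
    simpa using hrow.symm
  simp only [hfu] at hsum
  simpa [Pi.single_apply, mul_ite, mul_one, mul_zero, Finset.sum_ite_eq'] using hsum


end
end

section
/- Let g ≥ 3 be odd and let P, Q ∈ POLss_{g,m×m} be skew-symmetric matrix polynomials of grade g such that the leading coefficient of P (the coefficient of λ^g) is the zero matrix. If the linearization F_Q belongs to the closure, in the space of mg×mg skew-symmetric pencils with the Euclidean topology, of the congruence orbit {Sᵀ F_P S : S ∈ GL_{mg}(ℂ)}, then the leading coefficient of Q is the zero matrix. -/
open Matrix

noncomputable section

namespace ZZAux

def sel {ι n : Type} [Fintype n] [DecidableEq n] (f : ι → n) : Matrix ι n ℂ :=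
  Matrix.of fun i k => if k = f i then 1 else 0

lemma submatrix_eq {ι n : Type} [Fintype ι] [Fintype n] [DecidableEq ι] [DecidableEq n]
    (M : Matrix n n ℂ) (f h : ι → n) :
    M.submatrix f h = sel f * M * (sel h)ᵀ := by
  ext i j
  simp [Matrix.mul_apply, sel, Finset.sum_ite_eq, ite_mul, mul_ite, Finset.sum_ite_eq']

lemma rank_submatrix_le' {ι n : Type} [Fintype ι] [Fintype n] [DecidableEq ι] [DecidableEq n]
    (M : Matrix n n ℂ) (f h : ι → n) :
    (M.submatrix f h).rank ≤ M.rank := by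
  rw [submatrix_eq M f h]
  exact le_trans (Matrix.rank_mul_le_left _ _)
    (le_trans (Matrix.rank_mul_le_right _ _) le_rfl)

lemma det_eq_zero_of_rank_lt {ι n : Type} [Fintype ι] [Fintype n] [DecidableEq ι] [DecidableEq n]
    (M : Matrix n n ℂ) (f h : ι → n) (hr : M.rank < Fintype.card ι) :
    (M.submatrix f h).det = 0 := by
  by_contra hd
  have hu : IsUnit (M.submatrix f h) := (Matrix.isUnit_iff_isUnit_det _).2 (Ne.isUnit hd)
  have := Matrix.rank_of_isUnit _ hu
  have h2 := rank_submatrix_le' M f h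
  omega


lemma linA_row_zero {m g : ℕ} (P : Fin (g + 1) → Mat m)
    (hPlead : P ⟨g, Nat.lt_succ_self g⟩ = 0)
    (p q : Fin g × Fin m) (hp : (p.1 : ℕ) = 0) :
    linA m g P p q = 0 := by
  unfold linA
  have hg : g - (p.1 : ℕ) = g := by omega
  simp only [Matrix.of_apply]
  split_ifs with h1 h2 h3 h4
  · have : (⟨g - (p.1 : ℕ), Nat.lt_succ_of_le (Nat.sub_le g _)⟩ : Fin (g+1)) =
        ⟨g, Nat.lt_succ_self g⟩ := by
      apply Fin.ext; simp [hg]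
    rw [this, hPlead]; rfl
  · rfl
  · omega
  · omega
  · rfl

lemma rank_linA_le {m g : ℕ} (hg : 0 < g) (P : Fin (g + 1) → Mat m)
    (hPlead : P ⟨g, Nat.lt_succ_self g⟩ = 0) :
    (linA m g P).rank ≤ (g - 1) * m := by
  classical
  set w : Fin g × Fin m → ℂ := fun p => if (p.1 : ℕ) = 0 then 0 else 1 with hw
  have hDM : Matrix.diagonal w * linA m g P = linA m g P := by
    ext p q
    rw [Matrix.diagonal_mul]
    by_cases hp : (p.1 : ℕ) = 0
    · rw [linA_row_zero P hPlead p q hp]; simp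
    · simp [hw, hp]
  have h1 : (linA m g P).rank ≤ (Matrix.diagonal w).rank := by
    conv_lhs => rw [← hDM]
    exact Matrix.rank_mul_le_left _ _
  rw [Matrix.rank_diagonal] at h1
  refine le_trans h1 (le_of_eq ?_)
  have e1 : {i : Fin g × Fin m // w i ≠ 0} ≃ {k : Fin g // (k : ℕ) ≠ 0} × Fin m :=
    { toFun := fun x => (⟨x.1.1, by have := x.2; simp [hw] at this; exact this⟩, x.1.2)
      invFun := fun y => ⟨(y.1.1, y.2), by simp [hw, y.1.2]⟩
      left_inv := fun x => by ext <;> rfl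
      right_inv := fun y => by ext <;> rfl }
  rw [Fintype.card_congr e1, Fintype.card_prod, Fintype.card_fin]
  congr 1
  have e2 : {k : Fin g // (k : ℕ) ≠ 0} ≃ {k : Fin g // k ≠ ⟨0, hg⟩} :=
    Equiv.subtypeEquivRight (fun k => by
      constructor
      · intro h h'; exact h (by rw [h'])
      · intro h h'; exact h (Fin.ext h'))
  rw [Fintype.card_congr e2, Fintype.card_subtype_compl, Fintype.card_subtype_eq,
    Fintype.card_fin]

end ZZAux

namespace ZZAux

def emb (m g : ℕ) (hg : 0 < g) (i : Fin m) : Unit ⊕ (Fin (g-1) × Fin m) → Fin g × Fin m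
  | Sum.inl _ => (⟨0, hg⟩, i)
  | Sum.inr x => (⟨(x.1 : ℕ) + 1, by have := x.1.2; omega⟩, x.2)

def Cmat (m g : ℕ) (Q : Fin (g+1) → Mat m) :
    Matrix (Fin (g-1) × Fin m) (Fin (g-1) × Fin m) ℂ :=
  Matrix.of fun x y =>
    linA m g Q (⟨(x.1 : ℕ) + 1, by have := x.1.2; omega⟩, x.2)
               (⟨(y.1 : ℕ) + 1, by have := y.1.2; omega⟩, y.2)

def Dmat (m g : ℕ) (Q : Fin (g+1) → Mat m) :
    Matrix (Fin (g-1) × Fin m) (Fin (g-1) × Fin m) ℂ :=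
  Matrix.of fun x y =>
    if (y.1 : ℕ) = (x.1 : ℕ) ∧ (x.1 : ℕ) % 2 = 0 then
      Q ⟨g - ((x.1 : ℕ)+2), Nat.lt_succ_of_le (Nat.sub_le g _)⟩ x.2 y.2
    else if (y.1 : ℕ) = (x.1 : ℕ) + 1 ∧ (x.1 : ℕ) % 2 = 0 then (if x.2 = y.2 then 1 else 0)
    else if (x.1 : ℕ) = (y.1 : ℕ) + 1 ∧ (y.1 : ℕ) % 2 = 0 then -(if x.2 = y.2 then 1 else 0)
    else 0

lemma Cmat_apply (m g : ℕ) (Q : Fin (g+1) → Mat m) (k l : Fin (g-1)) (a b : Fin m) :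
    Cmat m g Q (k, a) (l, b) =
      if (l : ℕ) = (k : ℕ) ∧ (k : ℕ) % 2 = 1 then
        Q ⟨g - ((k : ℕ)+1), Nat.lt_succ_of_le (Nat.sub_le g _)⟩ a b
      else if (l : ℕ) = (k : ℕ) + 1 ∧ (k : ℕ) % 2 = 0 then -(if a = b then 1 else 0)
      else if (k : ℕ) = (l : ℕ) + 1 ∧ (l : ℕ) % 2 = 0 then (if a = b then 1 else 0)
      else 0 := by
  unfold Cmat linA
  simp only [Matrix.of_apply, Matrix.one_apply, Fin.mk.injEq]
  split_ifs <;> first | rfl | omega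

end ZZAux

namespace ZZAux

lemma CD (m g : ℕ) (hg : 3 ≤ g) (hodd : g % 2 = 1) (Q : Fin (g+1) → Mat m) :
    Cmat m g Q * Dmat m g Q = 1 := by
  ext ⟨k, a⟩ ⟨n, c⟩
  rw [Matrix.mul_apply, Fintype.sum_prod_type]
  rcases Nat.even_or_odd (k : ℕ) with hk | hk
  · -- k even
    have hk2 : (k : ℕ) % 2 = 0 := Nat.even_iff.mp hk
    have hlt : (k : ℕ) + 1 < g - 1 := by
      have := k.2
      omega
    set k₁ : Fin (g-1) := ⟨(k : ℕ) + 1, hlt⟩ with hk₁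
    have hk₁v : (k₁ : ℕ) = (k : ℕ) + 1 := rfl
    have hrow : ∀ (l : Fin (g-1)) (b : Fin m),
        Cmat m g Q (k, a) (l, b) = if l = k₁ then -(if a = b then 1 else 0) else 0 := by
      intro l b
      rw [Cmat_apply]
      rcases eq_or_ne l k₁ with rfl | hne
      · rw [if_pos rfl]
        split_ifs <;> first | rfl | (exfalso; omega)
      · have hv : (l : ℕ) ≠ (k : ℕ) + 1 := fun h => hne (Fin.ext (h.trans hk₁v.symm))
        rw [if_neg hne]
        split_ifs <;> first | rfl | (exfalso; omega)
    rw [Finset.sum_eq_single k₁ (fun l _ hl => by simp [hrow, hl])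
      (fun h => absurd (Finset.mem_univ _) h)]
    simp only [hrow, eq_self_iff_true, if_true]
    simp only [neg_mul, ite_mul, one_mul, zero_mul, neg_zero]
    rw [Finset.sum_neg_distrib, Finset.sum_ite_eq]
    simp only [Finset.mem_univ, if_true]
    have hD : Dmat m g Q (k₁, a) (n, c)
        = if (n : ℕ) = (k : ℕ) then -(if a = c then 1 else 0) else 0 := by
      simp only [Dmat, Matrix.of_apply]
      split_ifs <;> first | rfl | (exfalso; omega)
    rw [hD, Matrix.one_apply]
    by_cases hn : (n : ℕ) = (k : ℕ)
    · have hkn : k = n := Fin.ext hn.symm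
      subst hkn
      rw [if_pos hn, neg_neg]
      by_cases hac : a = c
      · subst hac; simp
      · have : ¬((k, a) = (k, c)) := by
          intro h; exact hac (congrArg Prod.snd h)
        rw [if_neg this, if_neg hac]
    · rw [if_neg hn, neg_zero]
      have : ¬((k, a) = (n, c)) := by
        intro h; exact hn (congrArg (fun p => ((Prod.fst p : Fin (g-1)) : ℕ)) h).symm
      rw [if_neg this]
  · -- k odd
    have hk2 : (k : ℕ) % 2 = 1 := Nat.odd_iff.mp hk
    have hpos : 0 < (k : ℕ) := by omega
    have hlt0 : (k : ℕ) - 1 < g - 1 := by have := k.2; omega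
    set k₀ : Fin (g-1) := ⟨(k : ℕ) - 1, hlt0⟩ with hk₀
    have hk₀v : (k₀ : ℕ) = (k : ℕ) - 1 := rfl
    have hne : k₀ ≠ k := by
      intro h
      have := congrArg Fin.val h
      rw [hk₀v] at this
      omega
    have hrow : ∀ (l : Fin (g-1)) (b : Fin m),
        Cmat m g Q (k, a) (l, b) =
          (if l = k then Q ⟨g - ((k : ℕ)+1), Nat.lt_succ_of_le (Nat.sub_le g _)⟩ a b else 0)
          + (if l = k₀ then (if a = b then 1 else 0) else 0) := by
      intro l b
      rw [Cmat_apply]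
      rcases eq_or_ne l k with rfl | hne1
      · rw [if_pos rfl, if_neg (Ne.symm hne)]
        split_ifs <;> first | rfl | (exfalso; omega) | simp
      · have hv1 : (l : ℕ) ≠ (k : ℕ) := fun h => hne1 (Fin.ext h)
        rw [if_neg hne1]
        rcases eq_or_ne l k₀ with rfl | hne0
        · rw [if_pos rfl]
          split_ifs <;> first | rfl | (exfalso; omega) | simp
        · have hv0 : (l : ℕ) ≠ (k : ℕ) - 1 := fun h => hne0 (Fin.ext (h.trans hk₀v.symm))
          rw [if_neg hne0]
          split_ifs <;> first | rfl | (exfalso; omega) | simp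
    have hsplit : ∀ (l : Fin (g-1)) (b : Fin m),
        Cmat m g Q (k, a) (l, b) * Dmat m g Q (l, b) (n, c) =
          (if l = k then Q ⟨g - ((k : ℕ)+1), Nat.lt_succ_of_le (Nat.sub_le g _)⟩ a b
              * Dmat m g Q (l, b) (n, c) else 0)
          + (if l = k₀ then (if a = b then 1 else 0) * Dmat m g Q (l, b) (n, c) else 0) := by
      intro l b
      rw [hrow, add_mul]
      simp only [ite_mul, zero_mul]
    simp only [hsplit]
    rw [Finset.sum_congr rfl (fun l _ => Finset.sum_add_distrib), Finset.sum_add_distrib]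
    have pull : ∀ (t : Fin (g-1)) (f : Fin (g-1) → Fin m → ℂ),
        (∑ l : Fin (g-1), ∑ b : Fin m, (if l = t then f l b else 0)) = ∑ b : Fin m, f t b := by
      intro t f
      have h1 : ∀ l : Fin (g-1), (∑ b : Fin m, (if l = t then f l b else 0))
          = if l = t then ∑ b : Fin m, f l b else 0 := by
        intro l; split_ifs <;> simp
      simp only [h1]
      rw [Finset.sum_ite_eq']
      simp
    rw [pull, pull]
    have h2 : (∑ b : Fin m, (if a = b then (1:ℂ) else 0) * Dmat m g Q (k₀, b) (n, c))
        = Dmat m g Q (k₀, a) (n, c) := by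
      simp only [ite_mul, one_mul, zero_mul, Finset.sum_ite_eq, Finset.mem_univ, if_true]
    rw [h2]
    have hD1 : ∀ b : Fin m, Dmat m g Q (k, b) (n, c)
        = if (n : ℕ) = (k : ℕ) - 1 then -(if b = c then 1 else 0) else 0 := by
      intro b
      simp only [Dmat, Matrix.of_apply]
      split_ifs <;> first | rfl | (exfalso; omega)
    have h1 : (∑ b : Fin m, Q ⟨g - ((k : ℕ)+1), Nat.lt_succ_of_le (Nat.sub_le g _)⟩ a b
          * Dmat m g Q (k, b) (n, c))
        = if (n : ℕ) = (k : ℕ) - 1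
            then -(Q ⟨g - ((k : ℕ)+1), Nat.lt_succ_of_le (Nat.sub_le g _)⟩ a c) else 0 := by
      simp only [hD1]
      by_cases hn : (n : ℕ) = (k : ℕ) - 1
      · simp only [hn, eq_self_iff_true, if_true]
        simp only [mul_neg, mul_ite, mul_one, mul_zero]
        rw [Finset.sum_neg_distrib, Finset.sum_ite_eq']
        simp
      · simp [hn]
    rw [h1]
    have hD0 : Dmat m g Q (k₀, a) (n, c)
        = if (n : ℕ) = (k : ℕ) - 1
            then Q ⟨g - ((k : ℕ)+1), Nat.lt_succ_of_le (Nat.sub_le g _)⟩ a c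
          else if (n : ℕ) = (k : ℕ) then (if a = c then 1 else 0) else 0 := by
      simp only [Dmat, Matrix.of_apply]
      have hQ : (⟨g - (((k₀ : ℕ))+2), Nat.lt_succ_of_le (Nat.sub_le g _)⟩ : Fin (g+1))
          = ⟨g - ((k : ℕ)+1), Nat.lt_succ_of_le (Nat.sub_le g _)⟩ := by
        apply Fin.ext
        simp only [hk₀v]
        omega
      rw [hQ]
      split_ifs <;> first | rfl | (exfalso; omega)
    rw [hD0]
    rw [Matrix.one_apply]
    by_cases hn1 : (n : ℕ) = (k : ℕ) - 1
    · have : ¬((k, a) = (n, c)) := by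
        intro h
        have := congrArg (fun p => ((Prod.fst p : Fin (g-1)) : ℕ)) h
        simp at this
        omega
      rw [if_pos hn1, if_pos hn1, if_neg this]
      ring
    · rw [if_neg hn1, if_neg hn1]
      by_cases hn2 : (n : ℕ) = (k : ℕ)
      · have hkn : k = n := Fin.ext hn2.symm
        subst hkn
        rw [if_pos rfl]
        by_cases hac : a = c
        · subst hac; simp
        · have : ¬((k, a) = (k, c)) := fun h => hac (congrArg Prod.snd h)
          rw [if_neg this, if_neg hac]
          simp
      · have : ¬((k, a) = (n, c)) := by
          intro h
          exact hn2 (congrArg (fun p => ((Prod.fst p : Fin (g-1)) : ℕ)) h).symm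
        rw [if_neg hn2, if_neg this]
        ring

end ZZAux

namespace ZZAux

lemma detC_ne (m g : ℕ) (hg : 3 ≤ g) (hodd : g % 2 = 1) (Q : Fin (g+1) → Mat m) :
    (Cmat m g Q).det ≠ 0 := by
  have h := congrArg Matrix.det (CD m g hg hodd Q)
  rw [Matrix.det_mul, Matrix.det_one] at h
  intro h0
  rw [h0, zero_mul] at h
  exact zero_ne_one h

lemma linA_top {m g : ℕ} (Q : Fin (g + 1) → Mat m) (p q : Fin g × Fin m)
    (hp : (p.1 : ℕ) = 0) (hq : (q.1 : ℕ) = 0) :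
    linA m g Q p q = Q ⟨g, Nat.lt_succ_self g⟩ p.2 q.2 := by
  unfold linA
  simp only [Matrix.of_apply]
  rw [if_pos (Fin.ext (hp.trans hq.symm)), if_pos (show (p.1 : ℕ) % 2 = 0 by omega)]
  have : (⟨g - (p.1 : ℕ), Nat.lt_succ_of_le (Nat.sub_le g _)⟩ : Fin (g+1))
      = ⟨g, Nat.lt_succ_self g⟩ := by
    apply Fin.ext; simp [hp]
  rw [this]

lemma linA_zero_row {m g : ℕ} (Q : Fin (g + 1) → Mat m) (p q : Fin g × Fin m)
    (hp : (p.1 : ℕ) = 0) (hq : (q.1 : ℕ) ≠ 0) :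
    linA m g Q p q = 0 := by
  unfold linA
  simp only [Matrix.of_apply]
  rw [if_neg (fun h => hq ((congrArg Fin.val h).symm.trans hp))]
  split_ifs <;> first | rfl | (exfalso; omega)

lemma linA_zero_col {m g : ℕ} (Q : Fin (g + 1) → Mat m) (p q : Fin g × Fin m)
    (hp : (p.1 : ℕ) ≠ 0) (hq : (q.1 : ℕ) = 0) :
    linA m g Q p q = 0 := by
  unfold linA
  simp only [Matrix.of_apply]
  rw [if_neg (fun h => hp ((congrArg Fin.val h).trans hq))]
  split_ifs <;> first | rfl | (exfalso; omega)

lemma submatrix_emb (m g : ℕ) (hg : 0 < g) (Q : Fin (g+1) → Mat m) (i j : Fin m) :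
    (linA m g Q).submatrix (emb m g hg i) (emb m g hg j) =
      Matrix.fromBlocks (Matrix.of fun _ _ => Q ⟨g, Nat.lt_succ_self g⟩ i j) 0 0
        (Cmat m g Q) := by
  ext x y
  rcases x with x | ⟨k, a⟩ <;> rcases y with y | ⟨l, b⟩
  · show linA m g Q (⟨0, hg⟩, i) (⟨0, hg⟩, j) = Q ⟨g, Nat.lt_succ_self g⟩ i j
    exact linA_top Q (⟨0, hg⟩, i) (⟨0, hg⟩, j) rfl rfl
  · show linA m g Q (⟨0, hg⟩, i) (⟨(l : ℕ) + 1, by have := l.2; omega⟩, b) = 0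
    exact linA_zero_row Q _ _ rfl (Nat.succ_ne_zero _)
  · show linA m g Q (⟨(k : ℕ) + 1, by have := k.2; omega⟩, a) (⟨0, hg⟩, j) = 0
    exact linA_zero_col Q _ _ (Nat.succ_ne_zero _) rfl
  · rfl

end ZZAux


end

noncomputable section

/-- Let `g ≥ 3` be odd and `P, Q` skew-symmetric `m×m` matrix polynomials of grade `g`
with zero leading coefficient of `P`.  If the linearization `F_Q` belongs to the
closure of the congruence orbit of `F_P` (pencils are identified with pairs of
matrices; as the set of skew-symmetric pencils is closed and the orbit consists of
skew-symmetric pencils, the ambient closure coincides with the closure in the space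
of skew-symmetric pencils), then the leading coefficient of `Q` is zero. -/
theorem closure_orbit_linearization_zero_leading_coefficient
    (m g : ℕ) (hg : 3 ≤ g) (hodd : Odd g)
    (P Q : Fin (g + 1) → Mat m)
    (hP : ∀ k, (P k)ᵀ = -(P k)) (hQ : ∀ k, (Q k)ᵀ = -(Q k))
    (hPlead : P ⟨g, Nat.lt_succ_self g⟩ = 0)
    (h : (linA m g Q, linB m g Q) ∈ closure
        {p : Matrix (Fin g × Fin m) (Fin g × Fin m) ℂ ×
             Matrix (Fin g × Fin m) (Fin g × Fin m) ℂ |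
          ∃ S, IsUnit S ∧ p = (Sᵀ * linA m g P * S, Sᵀ * linB m g P * S)}) :
    Q ⟨g, Nat.lt_succ_self g⟩ = 0 := by

  classical
  have hg0 : 0 < g := by omega
  have hodd' : g % 2 = 1 := Nat.odd_iff.mp hodd
  ext i j
  have hclosed : IsClosed {p : Matrix (Fin g × Fin m) (Fin g × Fin m) ℂ ×
      Matrix (Fin g × Fin m) (Fin g × Fin m) ℂ |
      ((p.1).submatrix (ZZAux.emb m g hg0 i) (ZZAux.emb m g hg0 j)).det = 0} := by
    have hc : Continuous fun p : Matrix (Fin g × Fin m) (Fin g × Fin m) ℂ ×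
        Matrix (Fin g × Fin m) (Fin g × Fin m) ℂ =>
        ((p.1).submatrix (ZZAux.emb m g hg0 i) (ZZAux.emb m g hg0 j)).det :=
      (Continuous.matrix_submatrix continuous_fst _ _).matrix_det
    exact isClosed_eq hc continuous_const
  have hsub : {p : Matrix (Fin g × Fin m) (Fin g × Fin m) ℂ ×
             Matrix (Fin g × Fin m) (Fin g × Fin m) ℂ |
          ∃ S, IsUnit S ∧ p = (Sᵀ * linA m g P * S, Sᵀ * linB m g P * S)} ⊆
      {p : Matrix (Fin g × Fin m) (Fin g × Fin m) ℂ ×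
      Matrix (Fin g × Fin m) (Fin g × Fin m) ℂ |
      ((p.1).submatrix (ZZAux.emb m g hg0 i) (ZZAux.emb m g hg0 j)).det = 0} := by
    rintro p ⟨S, hS, rfl⟩
    show ((Sᵀ * linA m g P * S).submatrix (ZZAux.emb m g hg0 i) (ZZAux.emb m g hg0 j)).det = 0
    apply ZZAux.det_eq_zero_of_rank_lt
    have h1 : (Sᵀ * linA m g P * S).rank ≤ (linA m g P).rank :=
      le_trans (Matrix.rank_mul_le_left _ _) (Matrix.rank_mul_le_right _ _)
    have h2 := ZZAux.rank_linA_le hg0 P hPlead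
    have hcard : Fintype.card (Unit ⊕ (Fin (g-1) × Fin m)) = 1 + (g-1)*m := by simp
    rw [hcard]
    omega
  have hQ0 : ((linA m g Q).submatrix (ZZAux.emb m g hg0 i) (ZZAux.emb m g hg0 j)).det = 0 :=
    closure_minimal hsub hclosed h
  rw [ZZAux.submatrix_emb, Matrix.det_fromBlocks_zero₂₁, Matrix.det_unique] at hQ0
  rcases mul_eq_zero.mp hQ0 with h0 | h0
  · exact h0
  · exact absurd h0 (ZZAux.detC_ne m g hg hodd' Q)

end
end

section
/- Let g ≥ 3 be odd and let P ∈ POLss_{g,m×m} be a skew-symmetric matrix polynomial of grade g whose leading coefficient (the coefficient of λ^g) is the zero matrix. Write F_P = λA − B for its linearization and set n = mg. Then for every matrix X ∈ ℂ^{n×n}, the top-left m×m block of Xᵀ A + A X is the zero matrix; consequently, the top-left m×m block of the λ-coefficient of every pencil λ(XᵀA + AX) − (XᵀB + BX) in the tangent space to the congruence orbit of F_P is zero. -/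
open Matrix

theorem Matrix.transpose_mul_add_mul_apply_eq_zero {ι R : Type*} [Fintype ι]
    [NonUnitalNonAssocSemiring R]
    {A : Matrix ι ι R} (X : Matrix ι ι R) {i j : ι}
    (hrow : ∀ k, A i k = 0) (hcol : ∀ k, A k j = 0) :
    (Xᵀ * A + A * X) i j = 0 := by
  simp [Matrix.mul_apply, hrow, hcol]

section FirstBlock

variable {m g : ℕ} (P : Fin (g + 1) → Mat m)

theorem linA_first_row (hg : 0 < g) (c : Fin m) (q : Fin g × Fin m) :
    linA m g P (⟨0, hg⟩, c) q = if q.1 = ⟨0, hg⟩ then P ⟨g, Nat.lt_succ_self g⟩ c q.2 else 0 := by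
  obtain ⟨⟨k, hk⟩, d⟩ := q
  rcases k with _ | k
  · simp [linA]
  · simp [linA, Fin.ext_iff]

theorem linA_first_col (hg : 0 < g) (p : Fin g × Fin m) (c : Fin m) :
    linA m g P p (⟨0, hg⟩, c) = if p.1 = ⟨0, hg⟩ then P ⟨g, Nat.lt_succ_self g⟩ p.2 c else 0 := by
  obtain ⟨⟨k, hk⟩, d⟩ := p
  rcases k with _ | k
  · simp [linA]
  · simp [linA, Fin.ext_iff]

end FirstBlock

/-- Let `g ≥ 3` be odd and `P` a skew-symmetric `m×m` matrix polynomial of grade `g` with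
zero leading coefficient, with linearization `F_P = λA − B`.  Then for every
`X ∈ ℂ^{mg×mg}` the top-left `m×m` block of `XᵀA + AX` is zero; consequently the
top-left `m×m` block of the λ-coefficient of every pencil in the tangent space
`{λ(XᵀA + AX) − (XᵀB + BX)}` to the congruence orbit of `F_P` is zero. -/
theorem tangent_space_top_left_block_zero
    (m g : ℕ) (hg : 3 ≤ g)
    (P : Fin (g + 1) → Mat m)
    (hPlead : P ⟨g, Nat.lt_succ_self g⟩ = 0)
    (X : Matrix (Fin g × Fin m) (Fin g × Fin m) ℂ) (a b : Fin m) :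
    (Xᵀ * linA m g P + linA m g P * X) (⟨0, by omega⟩, a) (⟨0, by omega⟩, b) = 0 :=
  Matrix.transpose_mul_add_mul_apply_eq_zero X
    (fun q => by simp [linA_first_row, hPlead])
    (fun p => by simp [linA_first_col, hPlead])
end

section
/- Let P be an m×m skew-symmetric matrix polynomial of odd grade g ≥ 3 and let F_P be its linearization. Then the normal rank of F_P, i.e., the rank of F_P as a matrix over the field of rational functions ℂ(X), equals rank P + m(g−1), where rank P is the rank of P over ℂ(X). -/
open Matrix

namespace NRaux
noncomputable section
open Matrix RatFunc

local notation "K" => RatFunc ℂ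

set_option synthInstance.maxHeartbeats 1000000
set_option maxHeartbeats 1000000

lemma sum_ite_fin {n : ℕ} {M : Type*} [AddCommMonoid M] (a : ℕ) (f : Fin n → M) :
    (∑ l : Fin n, if (l : ℕ) = a then f l else 0) = if h : a < n then f ⟨a, h⟩ else 0 := by
  split
  · next h =>
    rw [Fintype.sum_eq_single (⟨a, h⟩ : Fin n)]
    · simp
    · intro b hb
      rw [if_neg (fun hc => hb (Fin.ext hc))]
  · next h =>
    apply Finset.sum_eq_zero
    intro l _
    rw [if_neg (by omega)]

lemma sum_ite_fin' {n : ℕ} {M : Type*} [AddCommMonoid M] (a : ℕ) (f : Fin n → M) :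
    (∑ l : Fin n, if a = (l : ℕ) + 1 then f l else 0) =
      if h : a - 1 < n ∧ 1 ≤ a then f ⟨a - 1, h.1⟩ else 0 := by
  by_cases ha : 1 ≤ a
  · have hc : ∀ l : Fin n, (if a = (l : ℕ) + 1 then f l else 0)
        = (if (l : ℕ) = a - 1 then f l else 0) := by
      intro l; exact if_congr (by omega) rfl rfl
    rw [Finset.sum_congr rfl (fun l _ => hc l), sum_ite_fin]
    split
    · next h => rw [dif_pos ⟨h, ha⟩]
    · next h => rw [dif_neg (by tauto)]
  · have hc : ∀ l : Fin n, (if a = (l : ℕ) + 1 then f l else 0) = 0 := by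
      intro l; rw [if_neg (by omega)]
    rw [Finset.sum_congr rfl (fun l _ => hc l), dif_neg (by omega)]
    simp

lemma sum_delta {m : ℕ} (c : K) (i : Fin m) (u : Fin m → K) :
    (∑ j : Fin m, (c * if i = j then 1 else 0) * u j) = c * u i := by
  have hc : ∀ j : Fin m, (c * if i = j then 1 else 0) * u j
      = (if i = j then c * u j else 0) := by
    intro j; split <;> ring
  rw [Finset.sum_congr rfl (fun j _ => hc j), Fintype.sum_ite_eq]

variable {m g : ℕ} (P : Fin (g + 1) → Mat m)

def Pc (c : ℕ) : Matrix (Fin m) (Fin m) K :=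
  if h : c < g + 1 then (P ⟨c, h⟩).map (algebraMap ℂ K) else 0

def tailM (c : ℕ) : Matrix (Fin m) (Fin m) K :=
  ∑ l ∈ Finset.range (g + 1), (if c ≤ l then (RatFunc.X : K) ^ (l - c) else 0) • Pc P l

lemma tail_top (c : ℕ) (hc : g < c) : tailM P c = 0 := by
  apply Finset.sum_eq_zero
  intro l hl
  rw [Finset.mem_range] at hl
  rw [if_neg (by omega), zero_smul]

lemma tail_step (c : ℕ) (hc : c ≤ g) :
    tailM P c = Pc P c + (RatFunc.X : K) • tailM P (c + 1) := by
  unfold tailM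
  rw [Finset.smul_sum]
  have key : ∀ l ∈ Finset.range (g + 1),
      (if c ≤ l then (RatFunc.X : K) ^ (l - c) else 0) • Pc P l
        = (if (l : ℕ) = c then Pc P l else 0)
          + (RatFunc.X : K) • ((if c + 1 ≤ l then (RatFunc.X : K) ^ (l - (c + 1)) else 0) • Pc P l) := by
    intro l _
    rcases Nat.lt_trichotomy l c with h | h | h
    · rw [if_neg (by omega), if_neg (by omega), if_neg (by omega)]
      simp
    · subst h
      rw [if_pos le_rfl, if_pos rfl, if_neg (by omega)]
      simp
    · rw [if_pos (by omega), if_neg (by omega), if_pos (by omega)]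
      have h2 : l - c = (l - (c + 1)) + 1 := by omega
      rw [h2, pow_succ, smul_smul]
      rw [zero_add]
      ring_nf
  rw [Finset.sum_congr rfl key, Finset.sum_add_distrib]
  congr 1
  rw [Finset.sum_ite_eq' (Finset.range (g + 1)) c (fun l => Pc P l),
    if_pos (Finset.mem_range.mpr (by omega))]

lemma two_step (c : ℕ) (hc : c + 1 ≤ g) :
    tailM P c = Pc P c + (RatFunc.X : K) • Pc P (c + 1) + ((RatFunc.X : K) ^ 2) • tailM P (c + 2) := by
  rw [tail_step P c (by omega), tail_step P (c + 1) hc, smul_add, smul_smul, ← pow_two, ← add_assoc]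

lemma tail_pred (hg : 1 ≤ g) : tailM P (g - 1) = Pc P (g - 1) + (RatFunc.X : K) • Pc P g := by
  rw [tail_step P (g - 1) (by omega)]
  have h : g - 1 + 1 = g := by omega
  rw [h, tail_step P g le_rfl, tail_top P (g + 1) (by omega), smul_zero, add_zero]

lemma tail_zero : tailM P 0 = polyRatMat P := by
  ext i j
  unfold tailM polyRatMat
  rw [Matrix.sum_apply]
  rw [Matrix.of_apply, ← Fin.sum_univ_eq_sum_range
    (fun l => ((if 0 ≤ l then (RatFunc.X : K) ^ (l - 0) else 0) • Pc P l) i j)]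
  apply Finset.sum_congr rfl
  intro l _
  rw [if_pos (Nat.zero_le _), Matrix.smul_apply, smul_eq_mul, Nat.sub_zero]
  unfold Pc
  rw [dif_pos l.isLt]
  simp [mul_comm]

lemma LK_apply (p q : Fin g × Fin m) :
    pencilRatMat (linA m g P) (linB m g P) p q =
      (if p.1 = q.1 then
        (if (p.1 : ℕ) % 2 = 0 then
          (RatFunc.X : K) * algebraMap ℂ K (P ⟨g - (p.1 : ℕ), Nat.lt_succ_of_le (Nat.sub_le g _)⟩ p.2 q.2)
            + algebraMap ℂ K (P ⟨g - ((p.1 : ℕ) + 1), Nat.lt_succ_of_le (Nat.sub_le g _)⟩ p.2 q.2)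
         else 0) else 0)
      + (if (q.1 : ℕ) = (p.1 : ℕ) + 1 then
          ((if (p.1 : ℕ) % 2 = 0 then (-1 : K) else -RatFunc.X) * (if p.2 = q.2 then (1:K) else 0)) else 0)
      + (if (p.1 : ℕ) = (q.1 : ℕ) + 1 then
          ((if (q.1 : ℕ) % 2 = 0 then (1 : K) else RatFunc.X) * (if p.2 = q.2 then (1:K) else 0)) else 0) := by
  unfold pencilRatMat linA linB
  simp only [Matrix.of_apply, Matrix.one_apply, apply_ite (algebraMap ℂ K), _root_.map_one,
    map_zero, map_neg, Fin.ext_iff]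
  split_ifs <;> first | ring1 | (exfalso; omega)

def blk (w : Fin g × Fin m → K) (l : ℕ) : Fin m → K :=
  if h : l < g then (fun j => w (⟨l, h⟩, j)) else 0

def LKn : Matrix (Fin g × Fin m) (Fin g × Fin m) K :=
  Matrix.of fun p q =>
    (if (q.1 : ℕ) = (p.1 : ℕ) then
      (if (p.1 : ℕ) % 2 = 0 then
        (RatFunc.X : K) * Pc P (g - (p.1 : ℕ)) p.2 q.2 + Pc P (g - ((p.1 : ℕ) + 1)) p.2 q.2
       else 0) else 0)
    + (if (q.1 : ℕ) = (p.1 : ℕ) + 1 then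
        (if (p.1 : ℕ) % 2 = 0 then (-1 : K) else -RatFunc.X) * (if p.2 = q.2 then (1:K) else 0) else 0)
    + (if (p.1 : ℕ) = (q.1 : ℕ) + 1 then
        (if (q.1 : ℕ) % 2 = 0 then (1 : K) else RatFunc.X) * (if p.2 = q.2 then (1:K) else 0) else 0)

lemma LK_eq : pencilRatMat (linA m g P) (linB m g P) = LKn P := by
  ext p q
  rw [LK_apply]
  unfold LKn Pc
  simp only [Matrix.of_apply, dif_pos (Nat.lt_succ_of_le (Nat.sub_le g _)), Matrix.map_apply]
  congr 1
  congr 1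
  exact if_congr (by rw [Fin.ext_iff]; exact eq_comm) rfl rfl

lemma LKn_row (w : Fin g × Fin m → K) (k : ℕ) (hk : k < g) (i : Fin m) :
    (LKn P *ᵥ w) (⟨k, hk⟩, i)
      = (if k % 2 = 0 then
          (((RatFunc.X : K) • Pc P (g - k) + Pc P (g - (k + 1))) *ᵥ blk w k) i else 0)
        + (if k % 2 = 0 then -(blk w (k + 1) i) else -(RatFunc.X * blk w (k + 1) i))
        + (if k = 0 then 0 else
            (if (k - 1) % 2 = 0 then blk w (k - 1) i else RatFunc.X * blk w (k - 1) i)) := by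
  have hrow : (LKn P *ᵥ w) (⟨k, hk⟩, i)
      = ∑ l : Fin g, ∑ j : Fin m, LKn P (⟨k, hk⟩, i) (l, j) * w (l, j) := by
    simp only [Matrix.mulVec, dotProduct, Fintype.sum_prod_type]
  rw [hrow]
  simp only [LKn, Matrix.of_apply, add_mul, Finset.sum_add_distrib]
  congr 1
  · congr 1
    · -- diagonal block sum
      rw [Fintype.sum_eq_single (⟨k, hk⟩ : Fin g)
        (fun b hb => Finset.sum_eq_zero (fun j _ => by
          rw [if_neg (fun hc => hb (Fin.ext hc)), zero_mul]))]
      by_cases hp : k % 2 = 0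
      · rw [if_pos hp]
        have : ∀ j : Fin m, (if ((⟨k, hk⟩ : Fin g) : ℕ) = ((⟨k, hk⟩ : Fin g) : ℕ) then
            (if ((⟨k, hk⟩ : Fin g) : ℕ) % 2 = 0 then
              (RatFunc.X : K) * Pc P (g - k) i j + Pc P (g - (k + 1)) i j else 0) else 0) * w (⟨k, hk⟩, j)
            = (((RatFunc.X : K) • Pc P (g - k) + Pc P (g - (k + 1))) i j) * blk w k j := by
          intro j
          rw [if_pos rfl, if_pos hp, Matrix.add_apply, Matrix.smul_apply, smul_eq_mul,
            blk, dif_pos hk]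
        rw [Finset.sum_congr rfl (fun j _ => this j)]
        rfl
      · rw [if_neg hp]
        apply Finset.sum_eq_zero
        intro j _
        rw [if_pos rfl, if_neg hp, zero_mul]
    · -- superdiagonal sum
      by_cases h1 : k + 1 < g
      · rw [Fintype.sum_eq_single (⟨k + 1, h1⟩ : Fin g)
          (fun b hb => Finset.sum_eq_zero (fun j _ => by
            rw [if_neg (fun hc => hb (Fin.ext hc)), zero_mul]))]
        have : ∀ j : Fin m, (if ((⟨k + 1, h1⟩ : Fin g) : ℕ) = ((⟨k, hk⟩ : Fin g) : ℕ) + 1 then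
            (if ((⟨k, hk⟩ : Fin g) : ℕ) % 2 = 0 then (-1 : K) else -RatFunc.X)
              * (if i = j then (1:K) else 0) else 0) * w (⟨k + 1, h1⟩, j)
            = ((if k % 2 = 0 then (-1 : K) else -RatFunc.X) * (if i = j then (1:K) else 0))
              * w (⟨k + 1, h1⟩, j) := by
          intro j
          rw [if_pos rfl]
        rw [Finset.sum_congr rfl (fun j _ => this j), sum_delta]
        by_cases hp : k % 2 = 0
        · rw [if_pos hp, if_pos hp, blk, dif_pos h1, neg_one_mul]
        · rw [if_neg hp, if_neg hp, blk, dif_pos h1, neg_mul]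
      · rw [Finset.sum_eq_zero (fun l _ => Finset.sum_eq_zero (fun j _ => by
          rw [if_neg (by omega), zero_mul]))]
        rw [blk, dif_neg h1]
        split_ifs <;> simp
  · -- subdiagonal sum
    by_cases h0 : k = 0
    · subst h0
      rw [if_pos rfl]
      apply Finset.sum_eq_zero
      intro l _
      apply Finset.sum_eq_zero
      intro j _
      rw [if_neg (by omega), zero_mul]
    · have h1 : k - 1 < g := by omega
      rw [Fintype.sum_eq_single (⟨k - 1, h1⟩ : Fin g)
        (fun b hb => Finset.sum_eq_zero (fun j _ => by
          rw [if_neg (fun hc => hb (Fin.ext (by simp only [Fin.val_mk] at hc ⊢; omega))), zero_mul]))]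
      have : ∀ j : Fin m, (if ((⟨k, hk⟩ : Fin g) : ℕ) = ((⟨k - 1, h1⟩ : Fin g) : ℕ) + 1 then
          (if ((⟨k - 1, h1⟩ : Fin g) : ℕ) % 2 = 0 then (1 : K) else RatFunc.X)
            * (if i = j then (1:K) else 0) else 0) * w (⟨k - 1, h1⟩, j)
          = ((if (k - 1) % 2 = 0 then (1 : K) else RatFunc.X) * (if i = j then (1:K) else 0))
            * w (⟨k - 1, h1⟩, j) := by
        intro j
        rw [if_pos (by simp only [Fin.val_mk]; omega)]
      rw [Finset.sum_congr rfl (fun j _ => this j), sum_delta, if_neg h0]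
      by_cases hp : (k - 1) % 2 = 0
      · rw [if_pos hp, if_pos hp, blk, dif_pos h1, one_mul]
      · rw [if_neg hp, if_neg hp, blk, dif_pos h1]

def phiBlk (v : Fin m → K) (k : ℕ) : Fin m → K :=
  (RatFunc.X : K)⁻¹ ^ (k / 2) • (if k % 2 = 0 then v else tailM P (g - k) *ᵥ v)

def phi (v : Fin m → K) : Fin g × Fin m → K := fun p => phiBlk P v (p.1 : ℕ) p.2

lemma blk_phi (v : Fin m → K) (l : ℕ) :
    blk (phi P v) l = if l < g then phiBlk P v l else 0 := by
  unfold blk phi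
  by_cases h : l < g
  · rw [dif_pos h, if_pos h]
  · rw [dif_neg h, if_neg h]

lemma hXY : (RatFunc.X : K) * RatFunc.X⁻¹ = 1 := mul_inv_cancel₀ RatFunc.X_ne_zero

lemma even_row_combo (v : Fin m → K) (c a : ℕ) (hc : c + 1 ≤ g) (ha : 1 ≤ a) (i : Fin m) :
    (((RatFunc.X : K) • Pc P (c + 1) + Pc P c) *ᵥ ((RatFunc.X : K)⁻¹ ^ a • v)) i
      + RatFunc.X * ((RatFunc.X : K)⁻¹ ^ (a - 1) * (tailM P (c + 2) *ᵥ v) i)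
    = (RatFunc.X : K)⁻¹ ^ a * (tailM P c *ᵥ v) i := by
  obtain ⟨b, rfl⟩ : ∃ b, a = b + 1 := ⟨a - 1, by omega⟩
  rw [two_step P c hc]
  simp only [Matrix.add_mulVec, Matrix.smul_mulVec, Matrix.mulVec_smul,
    Pi.add_apply, Pi.smul_apply, smul_eq_mul, Nat.add_sub_cancel]
  linear_combination (-(RatFunc.X * (RatFunc.X : K)⁻¹ ^ b * (tailM P (c + 2) *ᵥ v) i)) * hXY

lemma row_phi (hg : 3 ≤ g) (hodd : Odd g) (v : Fin m → K) (k : ℕ) (hk : k < g) (i : Fin m) :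
    (LKn P *ᵥ phi P v) (⟨k, hk⟩, i)
      = if k = g - 1 then (RatFunc.X : K)⁻¹ ^ ((g - 1) / 2) * (tailM P 0 *ᵥ v) i else 0 := by
  obtain ⟨gh, hgo⟩ := hodd
  rw [LKn_row]
  by_cases hp : k % 2 = 0
  · by_cases hk0 : k = 0
    · subst hk0
      rw [if_pos hp, if_pos hp, if_pos rfl, if_neg (by omega : ¬ (0:ℕ) = g - 1), add_zero]
      rw [blk_phi, blk_phi, if_pos (by omega : 0 < g), if_pos (by omega : 1 < g)]
      unfold phiBlk
      rw [if_pos (by norm_num : 0 % 2 = 0), if_neg (by norm_num : ¬ 1 % 2 = 0)]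
      rw [tail_pred P (by omega)]
      simp only [show (0:ℕ) / 2 = 0 from rfl, show (1:ℕ) / 2 = 0 from rfl, pow_zero, one_smul,
        Nat.sub_zero, Nat.zero_add, Matrix.add_mulVec, Matrix.smul_mulVec,
        Pi.add_apply, Pi.smul_apply, smul_eq_mul]
      ring
    · by_cases hkl : k = g - 1
      · subst hkl
        rw [if_pos hp, if_pos hp, if_neg hk0, if_pos rfl]
        rw [if_neg (by omega : ¬ (g - 1 - 1) % 2 = 0)]
        rw [blk_phi, blk_phi, blk_phi, if_pos hk, if_neg (by omega : ¬ g - 1 + 1 < g),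
          if_pos (by omega : g - 1 - 1 < g)]
        unfold phiBlk
        rw [if_pos hp, if_neg (by omega : ¬ (g - 1 - 1) % 2 = 0)]
        simp only [Pi.smul_apply, smul_eq_mul, Pi.zero_apply, neg_zero, add_zero]
        have hgk : g - (g - 1 + 1) = 0 := by omega
        have hc1 : (0:ℕ) + 1 = g - (g - 1) := by omega
        have hc2 : (0:ℕ) + 2 = g - (g - 1 - 1) := by omega
        have he1 : (g - 1 - 1) / 2 = (g - 1) / 2 - 1 := by omega
        have combo := even_row_combo P v 0 ((g - 1) / 2) (by omega) (by omega) i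
        rw [hc1, hc2] at combo
        rw [hgk, he1]
        linear_combination combo
      · rw [if_pos hp, if_pos hp, if_neg hk0, if_neg hkl,
          if_neg (by omega : ¬ (k - 1) % 2 = 0)]
        rw [blk_phi, blk_phi, blk_phi, if_pos hk, if_pos (by omega : k + 1 < g),
          if_pos (by omega : k - 1 < g)]
        unfold phiBlk
        rw [if_pos hp, if_neg (by omega : ¬ (k + 1) % 2 = 0),
          if_neg (by omega : ¬ (k - 1) % 2 = 0)]
        simp only [Pi.smul_apply, smul_eq_mul]
        have hc1 : g - (k + 1) + 1 = g - k := by omega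
        have hc2 : g - (k + 1) + 2 = g - (k - 1) := by omega
        have he1 : (k - 1) / 2 = k / 2 - 1 := by omega
        have he2 : (k + 1) / 2 = k / 2 := by omega
        have combo := even_row_combo P v (g - (k + 1)) (k / 2) (by omega) (by omega) i
        rw [hc1, hc2] at combo
        rw [he1, he2]
        linear_combination combo
  · have hk1 : k + 1 < g := by omega
    rw [if_neg hp, if_neg hp, if_neg (by omega : ¬ k = 0),
      if_pos (by omega : (k - 1) % 2 = 0), if_neg (by omega : ¬ k = g - 1)]
    rw [blk_phi, blk_phi, if_pos hk1, if_pos (by omega : k - 1 < g)]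
    unfold phiBlk
    rw [if_pos (by omega : (k + 1) % 2 = 0), if_pos (by omega : (k - 1) % 2 = 0)]
    simp only [Pi.smul_apply, smul_eq_mul]
    have he : (k + 1) / 2 = (k - 1) / 2 + 1 := by omega
    rw [he, pow_succ]
    linear_combination (-((RatFunc.X : K)⁻¹ ^ ((k - 1) / 2) * v i)) * hXY

lemma ker_blocks (hg : 3 ≤ g) (hodd : Odd g) (w : Fin g × Fin m → K)
    (hw : LKn P *ᵥ w = 0) :
    ∀ k, k < g → blk w k = phiBlk P (blk w 0) k := by
  obtain ⟨gh, hgo⟩ := hodd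
  intro k
  induction k using Nat.strong_induction_on with
  | _ k IH =>
    intro hk
    match k, hk, IH with
    | 0, hk, IH =>
      funext i
      unfold phiBlk
      rw [if_pos (by norm_num : 0 % 2 = 0)]
      simp [show (0:ℕ) / 2 = 0 from rfl]
    | (k' + 1), hk, IH =>
      funext i
      have hrow : (LKn P *ᵥ w) (⟨k', by omega⟩, i) = 0 := by rw [hw]; rfl
      rw [LKn_row P w k' (by omega) i] at hrow
      by_cases hp : k' % 2 = 0
      · rw [if_pos hp, if_pos hp] at hrow
        by_cases h0 : k' = 0
        · subst h0
          rw [if_pos rfl, add_zero] at hrow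
          unfold phiBlk
          rw [if_neg (by norm_num : ¬ 1 % 2 = 0)]
          rw [tail_pred P (by omega)]
          simp only [show (1:ℕ) / 2 = 0 from rfl, pow_zero, one_smul, Nat.sub_zero,
            Nat.zero_add, Matrix.add_mulVec, Matrix.smul_mulVec, Pi.add_apply,
            Pi.smul_apply, smul_eq_mul] at hrow ⊢
          linear_combination -hrow
        · rw [if_neg h0, if_neg (by omega : ¬ (k' - 1) % 2 = 0)] at hrow
          rw [IH k' (by omega) (by omega), IH (k' - 1) (by omega) (by omega)] at hrow
          unfold phiBlk at hrow ⊢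
          rw [if_pos hp, if_neg (by omega : ¬ (k' - 1) % 2 = 0)] at hrow
          rw [if_neg (by omega : ¬ (k' + 1) % 2 = 0)]
          simp only [Pi.smul_apply, smul_eq_mul] at hrow ⊢
          have hc1 : g - (k' + 1) + 1 = g - k' := by omega
          have hc2 : g - (k' + 1) + 2 = g - (k' - 1) := by omega
          have he1 : (k' - 1) / 2 = k' / 2 - 1 := by omega
          have he2 : (k' + 1) / 2 = k' / 2 := by omega
          have combo := even_row_combo P (blk w 0) (g - (k' + 1)) (k' / 2) (by omega) (by omega) i
          rw [hc1, hc2] at combo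
          rw [he1] at hrow
          rw [he2]
          linear_combination combo - hrow
      · rw [if_neg hp, if_neg hp, if_neg (by omega : ¬ k' = 0),
          if_pos (by omega : (k' - 1) % 2 = 0)] at hrow
        rw [IH (k' - 1) (by omega) (by omega)] at hrow
        unfold phiBlk at hrow ⊢
        rw [if_pos (by omega : (k' - 1) % 2 = 0)] at hrow
        rw [if_pos (by omega : (k' + 1) % 2 = 0)]
        simp only [Pi.smul_apply, smul_eq_mul] at hrow ⊢
        have he : (k' + 1) / 2 = (k' - 1) / 2 + 1 := by omega
        rw [he, pow_succ]
        apply mul_left_cancel₀ (RatFunc.X_ne_zero : (RatFunc.X : K) ≠ 0)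
        linear_combination (-1 : K) * hrow
          - ((RatFunc.X : K)⁻¹ ^ ((k' - 1) / 2) * blk w 0 i) * hXY

lemma phi_add (v v' : Fin m → K) : phi P (v + v') = phi P v + phi P v' := by
  funext p
  unfold phi phiBlk
  by_cases h : (p.1 : ℕ) % 2 = 0 <;>
    simp [h, Matrix.mulVec_add, Pi.smul_apply, smul_eq_mul, mul_add]

lemma phi_smul (c : K) (v : Fin m → K) : phi P (c • v) = c • phi P v := by
  funext p
  unfold phi phiBlk
  by_cases h : (p.1 : ℕ) % 2 = 0 <;>
    simp [h, Matrix.mulVec_smul, Pi.smul_apply, smul_eq_mul, mul_left_comm]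

lemma phi_in_ker (hg : 3 ≤ g) (hodd : Odd g) (v : Fin m → K)
    (hv : polyRatMat P *ᵥ v = 0) : LKn P *ᵥ phi P v = 0 := by
  funext p
  obtain ⟨⟨k, hk⟩, i⟩ := p
  rw [row_phi P hg hodd v k hk i, tail_zero P, hv]
  split_ifs <;> simp

lemma ker_eq_phi (hg : 3 ≤ g) (hodd : Odd g) (w : Fin g × Fin m → K)
    (hw : LKn P *ᵥ w = 0) : w = phi P (blk w 0) := by
  funext p
  obtain ⟨⟨k, hk⟩, i⟩ := p
  have h := congrFun (ker_blocks P hg hodd w hw k hk) i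
  rw [blk, dif_pos hk] at h
  exact h

lemma ker_to_poly (hg : 3 ≤ g) (hodd : Odd g) (w : Fin g × Fin m → K)
    (hw : LKn P *ᵥ w = 0) : polyRatMat P *ᵥ blk w 0 = 0 := by
  funext i
  have hg1 : g - 1 < g := by omega
  have h2 : (LKn P *ᵥ phi P (blk w 0)) (⟨g - 1, hg1⟩, i) = 0 := by
    rw [← ker_eq_phi P hg hodd w hw, hw]
    rfl
  rw [row_phi P hg hodd _ (g - 1) hg1 i, if_pos rfl] at h2
  have hXn : ((RatFunc.X : K)⁻¹ ^ ((g - 1) / 2)) ≠ 0 :=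
    pow_ne_zero _ (inv_ne_zero RatFunc.X_ne_zero)
  have h3 := (mul_eq_zero.mp h2).resolve_left hXn
  rw [tail_zero P] at h3
  simpa using h3

lemma ker_equiv (hg : 3 ≤ g) (hodd : Odd g) :
    Module.finrank K (LinearMap.ker (Matrix.mulVecLin (LKn P)))
      = Module.finrank K (LinearMap.ker (Matrix.mulVecLin (polyRatMat P))) := by
  have hg1 : 0 < g := by omega
  refine (LinearEquiv.finrank_eq (?_ :
    (LinearMap.ker (Matrix.mulVecLin (polyRatMat P))) ≃ₗ[K]
      (LinearMap.ker (Matrix.mulVecLin (LKn P))))).symm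
  exact
  { toFun := fun x => ⟨phi P x.1, by
      rw [LinearMap.mem_ker, Matrix.mulVecLin_apply]
      refine phi_in_ker P hg hodd x.1 ?_
      have h := x.2
      rwa [LinearMap.mem_ker, Matrix.mulVecLin_apply] at h⟩
    map_add' := fun x y => Subtype.ext (phi_add P x.1 y.1)
    map_smul' := fun c x => Subtype.ext (phi_smul P c x.1)
    invFun := fun y => ⟨blk y.1 0, by
      rw [LinearMap.mem_ker, Matrix.mulVecLin_apply]
      refine ker_to_poly P hg hodd y.1 ?_
      have h := y.2
      rwa [LinearMap.mem_ker, Matrix.mulVecLin_apply] at h⟩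
    left_inv := fun x => Subtype.ext (by
      show blk (phi P x.1) 0 = x.1
      funext i
      rw [blk_phi, if_pos hg1]
      unfold phiBlk
      simp [show (0:ℕ) / 2 = 0 from rfl])
    right_inv := fun y => Subtype.ext (by
      refine (ker_eq_phi P hg hodd y.1 ?_).symm
      have h := y.2
      rwa [LinearMap.mem_ker, Matrix.mulVecLin_apply] at h) }

lemma main (hg : 3 ≤ g) (hodd : Odd g) :
    (pencilRatMat (linA m g P) (linB m g P)).rank = (polyRatMat P).rank + m * (g - 1) := by
  rw [LK_eq P]
  have e1 := LinearMap.finrank_range_add_finrank_ker (Matrix.mulVecLin (LKn P))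
  have e2 := LinearMap.finrank_range_add_finrank_ker (Matrix.mulVecLin (polyRatMat P))
  rw [Module.finrank_fintype_fun_eq_card] at e1 e2
  simp only [Fintype.card_prod, Fintype.card_fin] at e1 e2
  have e3 := ker_equiv P hg hodd
  have d1 : (LKn P).rank = Module.finrank K (LinearMap.range (Matrix.mulVecLin (LKn P))) := rfl
  have d2 : (polyRatMat P).rank
      = Module.finrank K (LinearMap.range (Matrix.mulVecLin (polyRatMat P))) := rfl
  obtain ⟨g', rfl⟩ : ∃ g', g = g' + 3 := ⟨g - 3, by omega⟩
  have hmg : (g' + 3) * m = m * g' + 3 * m := by ring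
  have hmg2 : m * (g' + 3 - 1) = m * g' + 2 * m := by
    have : g' + 3 - 1 = g' + 2 := rfl
    rw [this]; ring
  rw [d1, d2, hmg2]
  rw [hmg] at e1
  omega

end
end NRaux

noncomputable section

/-- For a skew-symmetric `m×m` matrix polynomial `P` of odd grade `g ≥ 3`, the normal rank
of its linearization `F_P` (the rank of `X·A − B` over `ℂ(X)`) equals
`rank P + m(g−1)`. -/
theorem linearization_normal_rank
    (m g : ℕ) (hg : 3 ≤ g) (hodd : Odd g)
    (P : Fin (g + 1) → Mat m) (hP : ∀ k, (P k)ᵀ = -(P k)) :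
    pencilRank (linA m g P) (linB m g P) = polyRank P + m * (g - 1) := by
  unfold pencilRank polyRank
  exact NRaux.main P hg hodd

end
end

section
/- Two skew-symmetric n×n complex matrix pencils are congruent if and only if they are strictly equivalent. That is, if λA − B and λC − D are pencils with Aᵀ = −A, Bᵀ = −B, Cᵀ = −C, Dᵀ = −D, and there exist invertible matrices Q, R ∈ ℂ^{n×n} with QAR = C and QBR = D, then there exists an invertible matrix S ∈ ℂ^{n×n} with SᵀAS = C and SᵀBS = D (and conversely, congruent pencils are strictly equivalent). -/
/-!
If `Q A R = C` with `A` and `C` skew-symmetric, transposing gives `Rᵀ A Qᵀ = Q A R`, so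
`W := R Q⁻ᵀ` is self-adjoint for the form `A`: `A W = Wᵀ A`; likewise for `B`. An invertible
complex matrix has a square root `V` that is a polynomial in it (interpolate square roots at the
eigenvalues, then correct the nilpotent error by Newton's method), so `V` is self-adjoint for
both forms too, and `S := V Qᵀ` satisfies `Sᵀ A S = Q A V² Qᵀ = Q A R = C`, and likewise for `B`.
-/

open Matrix

noncomputable section

open Polynomial

theorem isSquare_of_isNilpotent_sq_sub {S : Type*} [CommRing S] (h2 : IsUnit (2 : S))
    {u y : S} (hu : IsUnit u) (h : IsNilpotent (y ^ 2 - u)) : IsSquare u := by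
  have hy : IsUnit y := by
    simpa [isUnit_pow_iff two_ne_zero] using h.isUnit_add_left_of_commute hu (Commute.all _ _)
  obtain ⟨v, ⟨-, hv⟩, -⟩ := existsUnique_nilpotent_sub_and_aeval_eq_zero (P := X ^ 2 - C u)
    (x := y) (by simpa using h) (by simpa [one_add_one_eq_two] using h2.mul hy)
  exact ⟨v, by simpa [sub_eq_zero, sq, eq_comm] using hv⟩

namespace AdjoinRoot

variable {K : Type*} [Field K]

theorem isUnit_root_of_coeff_zero_ne_zero {f : K[X]} (h : f.coeff 0 ≠ 0) : IsUnit (root f) := by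
  obtain ⟨a, b, hab⟩ := irreducible_X.coprime_iff_not_dvd.2 (X_dvd_iff.not.2 h)
  refine .of_mul_eq_one_right (mk f a) ?_
  simpa using congr_arg (mk f) hab

theorem isNilpotent_mk_of_forall_isRoot {f g : K[X]} (hf : f.Monic) (hs : f.Splits)
    (hg : ∀ a ∈ f.roots, g.IsRoot a) : IsNilpotent (mk f g) := by
  refine ⟨f.roots.card, ?_⟩
  rw [← map_pow, mk_eq_zero]
  conv_lhs => rw [hs.eq_prod_roots_of_monic hf]
  calc (f.roots.map fun a => X - C a).prod ∣ (f.roots.map fun _ => g).prod :=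
        Multiset.prod_dvd_prod_of_dvd _ _ fun a ha => dvd_iff_isRoot.2 (hg a ha)
    _ = g ^ f.roots.card := by rw [Multiset.map_const', Multiset.prod_replicate]

theorem isSquare_root [IsAlgClosed K] (h2 : (2 : K) ≠ 0) {f : K[X]} (hf : f.Monic)
    (h0 : f.coeff 0 ≠ 0) : IsSquare (root f) := by
  classical
  choose s hs using fun a : K => IsAlgClosed.exists_pow_nat_eq a two_pos
  set p := Lagrange.interpolate f.roots.toFinset id s
  have hp : ∀ a ∈ f.roots, (p ^ 2 - X).IsRoot a := fun a ha => by
    have : p.eval a = s a :=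
      Lagrange.eval_interpolate_at_node s (Set.injOn_id _) (Multiset.mem_toFinset.2 ha)
    simp [this, hs]
  refine isSquare_of_isNilpotent_sq_sub (y := mk f p) ?_ (isUnit_root_of_coeff_zero_ne_zero h0) ?_
  · simpa only [map_ofNat] using (IsUnit.mk0 _ h2).map (of f)
  · simpa using isNilpotent_mk_of_forall_isRoot hf (IsAlgClosed.splits f) hp

end AdjoinRoot

theorem exists_aeval_sq_eq_of_aeval_eq_zero {K A : Type*} [Field K] [IsAlgClosed K] [Ring A]
    [Algebra K A] (h2 : (2 : K) ≠ 0) {f : K[X]} (hf : f.Monic) (h0 : f.coeff 0 ≠ 0) {w : A}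
    (hw : aeval w f = 0) : ∃ q : K[X], aeval w q ^ 2 = w := by
  obtain ⟨v, hv⟩ := AdjoinRoot.isSquare_root h2 hf h0
  obtain ⟨q, rfl⟩ := AdjoinRoot.mk_surjective v
  obtain ⟨r, hr⟩ : f ∣ X - q ^ 2 := by
    rw [← AdjoinRoot.mk_eq_mk, AdjoinRoot.mk_X, hv, sq, map_mul]
  refine ⟨q, (sub_eq_zero.1 ?_).symm⟩
  simpa [hw] using congr_arg (aeval w) hr

theorem SemiconjBy.aeval {R A : Type*} [CommSemiring R] [Semiring A] [Algebra R A] {a x y : A}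
    (h : SemiconjBy a x y) (p : R[X]) : SemiconjBy a (aeval x p) (aeval y p) := by
  induction p using Polynomial.induction_on with
  | C r => simpa [SemiconjBy] using (Algebra.commutes r a).symm
  | add p q hp hq => simpa using hp.add_right hq
  | monomial n r ih => simpa [pow_succ, ← mul_assoc] using ih.mul_right h

namespace Matrix

variable {n R : Type*} [Fintype n] [DecidableEq n] [CommRing R]

theorem transpose_aeval (W : Matrix n n R) (p : R[X]) : (aeval W p)ᵀ = aeval Wᵀ p := by
  apply MulOpposite.op_injective
  rw [← aeval_op_apply]
  exact (aeval_algHom_apply (transposeAlgEquiv n R R) W p).symm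

theorem semiconjBy_aeval_transpose {A W : Matrix n n R} (h : SemiconjBy A W Wᵀ) (p : R[X]) :
    SemiconjBy A (aeval W p) (aeval W p)ᵀ := by
  rw [transpose_aeval]
  exact h.aeval p

theorem semiconjBy_transpose_of_transpose_eq_neg {A Q W : Matrix n n R} (hQ : IsUnit Q)
    (hA : Aᵀ = -A) (h : (Q * A * (W * Qᵀ))ᵀ = -(Q * A * (W * Qᵀ))) : SemiconjBy A W Wᵀ := by
  simp only [transpose_mul, transpose_transpose, hA, Matrix.mul_neg, Matrix.neg_mul, neg_inj,
    Matrix.mul_assoc] at h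
  refine (hQ.mul_left_cancel (((isUnit_transpose Q).2 hQ).mul_right_cancel ?_)).symm
  simpa only [Matrix.mul_assoc] using h

theorem transpose_mul_mul_mul_eq_of_semiconjBy {A V : Matrix n n R} (h : SemiconjBy A V Vᵀ)
    (P : Matrix n n R) : (V * P)ᵀ * A * (V * P) = Pᵀ * A * (V ^ 2 * P) := by
  simp only [transpose_mul, sq, Matrix.mul_assoc]
  rw [← Matrix.mul_assoc Vᵀ A, ← h.eq, Matrix.mul_assoc]

theorem exists_aeval_sq_eq_of_isUnit {K : Type*} [Field K] [IsAlgClosed K] (h2 : (2 : K) ≠ 0)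
    {W : Matrix n n K} (hW : IsUnit W) : ∃ q : K[X], aeval W q ^ 2 = W := by
  refine exists_aeval_sq_eq_of_aeval_eq_zero h2 W.charpoly_monic (fun h0 => ?_)
    (aeval_self_charpoly W)
  rw [isUnit_iff_isUnit_det, det_eq_sign_charpoly_coeff, h0, mul_zero] at hW
  exact not_isUnit_zero hW

end Matrix

/-- Two skew-symmetric `n×n` complex matrix pencils `λA − B` and `λC − D` are strictly
equivalent (`QAR = C`, `QBR = D` with `Q, R` invertible) if and only if they are
congruent (`SᵀAS = C`, `SᵀBS = D` with `S` invertible). -/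
theorem skewsymmetric_pencils_congruent_iff_strictly_equivalent
    (n : ℕ) (A B C D : Mat n)
    (hA : Aᵀ = -A) (hB : Bᵀ = -B) (hC : Cᵀ = -C) (hD : Dᵀ = -D) :
    (∃ Q R : Mat n, IsUnit Q ∧ IsUnit R ∧ Q * A * R = C ∧ Q * B * R = D) ↔
      (∃ S : Mat n, IsUnit S ∧ Sᵀ * A * S = C ∧ Sᵀ * B * S = D) := by
  constructor
  · rintro ⟨Q, R, hQ, hR, rfl, rfl⟩
    have hQt : IsUnit Qᵀ := (isUnit_transpose Q).2 hQ
    obtain ⟨W, hW, rfl⟩ : ∃ W, IsUnit W ∧ W * Qᵀ = R :=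
      ⟨R * Qᵀ⁻¹, hR.mul (isUnit_nonsing_inv_iff.2 hQt),
        nonsing_inv_mul_cancel_right _ _ ((isUnit_iff_isUnit_det _).1 hQt)⟩
    obtain ⟨q, hq⟩ := exists_aeval_sq_eq_of_isUnit two_ne_zero hW
    have hV : IsUnit (aeval W q) := (isUnit_pow_iff two_ne_zero).1 (by rwa [hq])
    have congr_of_skew : ∀ E : Mat n, Eᵀ = -E → (Q * E * (W * Qᵀ))ᵀ = -(Q * E * (W * Qᵀ)) →
        (aeval W q * Qᵀ)ᵀ * E * (aeval W q * Qᵀ) = Q * E * (W * Qᵀ) := fun E hE hQEW => by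
      rw [transpose_mul_mul_mul_eq_of_semiconjBy
        (semiconjBy_aeval_transpose (semiconjBy_transpose_of_transpose_eq_neg hQ hE hQEW) q),
        hq, transpose_transpose]
    exact ⟨aeval W q * Qᵀ, hV.mul hQt, congr_of_skew A hA hC, congr_of_skew B hB hD⟩
  · rintro ⟨S, hS, rfl, rfl⟩
    exact ⟨Sᵀ, S, (isUnit_transpose S).2 hS, hS, rfl, rfl⟩

end
end
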